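/- arXiv:1304.6878 — 5 statements merged into one kernel-verified Lean document; each statement's English description precedes it below -/
import Mathlib

section
/- Let n ≥ 3 and ω ∈ ℝ. The function u : ℝⁿ → ℝ defined by u(x) = exp((ω + n − |x|²)/2) is a smooth, strictly positive solution of −Δu + ωu = u log u² pointwise on ℝⁿ. -/
open MeasureTheory Real Filter

/-- The Laplacian of `u : ℝⁿ → ℝ`, as the sum of the second partial derivatives. -/
noncomputable def laplacian {n : ℕ} (u : EuclideanSpace ℝ (Fin n) → ℝ)
    (x : EuclideanSpace ℝ (Fin n)) : ℝ :=
  ∑ i : Fin n,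
    fderiv ℝ (fun y => fderiv ℝ u y (EuclideanSpace.single i 1)) x (EuclideanSpace.single i 1)


noncomputable def U (n : ℕ) (ω : ℝ) (y : EuclideanSpace ℝ (Fin n)) : ℝ :=
  Real.exp ((ω + n - ‖y‖ ^ 2) / 2)

variable {n : ℕ} (ω : ℝ)


lemma hU (y : EuclideanSpace ℝ (Fin n)) :
    HasFDerivAt (U n ω) (U n ω y • (-(innerSL ℝ y))) y := by
  have h1 : HasFDerivAt (fun z : EuclideanSpace ℝ (Fin n) => (ω + n - ‖z‖ ^ 2) / 2)
      (-(innerSL ℝ y)) y := by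
    have := ((hasFDerivAt_const (ω + (n:ℝ)) y).sub
      (hasStrictFDerivAt_norm_sq y).hasFDerivAt).const_smul ((2:ℝ)⁻¹)
    have heq : (fun z : EuclideanSpace ℝ (Fin n) => (ω + n - ‖z‖ ^ 2) / 2)
        = fun z : EuclideanSpace ℝ (Fin n) => (2⁻¹ : ℝ) • (ω + n - ‖z‖ ^ 2) := by
      funext z
      simp [smul_eq_mul]
      ring
    have hder : -(innerSL ℝ y) = (2⁻¹ : ℝ) • ((0 : EuclideanSpace ℝ (Fin n) →L[ℝ] ℝ)
        - 2 • innerSL ℝ y) := by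
      ext v
      simp [two_smul]
      ring
    rw [heq, hder]
    exact this
  exact h1.exp

lemma fderiv_U (y : EuclideanSpace ℝ (Fin n)) (i : Fin n) :
    fderiv ℝ (U n ω) y (EuclideanSpace.single i 1) = -(y i) * U n ω y := by
  rw [(hU ω y).fderiv]
  simp [EuclideanSpace.inner_single_right, real_inner_comm]
  ring

lemma fderiv2_U (x : EuclideanSpace ℝ (Fin n)) (i : Fin n) :
    fderiv ℝ (fun y => fderiv ℝ (U n ω) y (EuclideanSpace.single i 1)) x
        (EuclideanSpace.single i 1)
      = U n ω x * (x i ^ 2 - 1) := by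
  have hfun : (fun y : EuclideanSpace ℝ (Fin n) =>
      fderiv ℝ (U n ω) y (EuclideanSpace.single i 1))
      = fun y => -(EuclideanSpace.proj (𝕜 := ℝ) i y) * U n ω y := by
    funext y
    rw [fderiv_U]
    rfl
  rw [hfun]
  have hc : HasFDerivAt (fun y : EuclideanSpace ℝ (Fin n) =>
      -(EuclideanSpace.proj (𝕜 := ℝ) i y))
      (-(EuclideanSpace.proj (𝕜 := ℝ) i)) x :=
    (EuclideanSpace.proj (𝕜 := ℝ) i).hasFDerivAt.neg
  rw [(show HasFDerivAt (fun y : EuclideanSpace ℝ (Fin n) => -(EuclideanSpace.proj (𝕜 := ℝ) i y) * U n ω y) _ x from hc.mul (hU ω x)).fderiv]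
  simp [EuclideanSpace.inner_single_right, EuclideanSpace.single_apply]
  ring

lemma lap_U (x : EuclideanSpace ℝ (Fin n)) :
    (∑ i : Fin n, fderiv ℝ (fun y => fderiv ℝ (U n ω) y (EuclideanSpace.single i 1)) x
        (EuclideanSpace.single i 1)) = U n ω x * (‖x‖ ^ 2 - n) := by
  have hnorm : ∑ i : Fin n, x i ^ 2 = ‖x‖ ^ 2 := by
    rw [← real_inner_self_eq_norm_sq]
    simp [PiLp.inner_apply, sq]
    rw [← sq, EuclideanSpace.norm_sq_eq]
    simp [Real.norm_eq_abs, sq]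
  simp_rw [fderiv2_U]
  rw [← Finset.mul_sum, Finset.sum_sub_distrib, hnorm]
  simp [mul_comm]

lemma contDiff_U : ContDiff ℝ (⊤ : ℕ∞) (U n ω) := by
  apply Real.contDiff_exp.comp
  exact ((contDiff_const.sub (contDiff_norm_sq ℝ)).div_const 2)

/-- For `n ≥ 3` and `ω ∈ ℝ`, `u(x) = exp((ω + n − |x|²)/2)` is a smooth, strictly positive
solution of `−Δu + ωu = u log u²` on `ℝⁿ`. -/
theorem gausson_omega_solves (n : ℕ) (hn : 3 ≤ n) (ω : ℝ) :
    ContDiff ℝ (⊤ : ℕ∞) (fun x : EuclideanSpace ℝ (Fin n) => Real.exp ((ω + n - ‖x‖ ^ 2) / 2)) ∧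
    ∀ x : EuclideanSpace ℝ (Fin n),
      0 < Real.exp ((ω + n - ‖x‖ ^ 2) / 2) ∧
      -(laplacian (fun y : EuclideanSpace ℝ (Fin n) => Real.exp ((ω + n - ‖y‖ ^ 2) / 2)) x)
          + ω * Real.exp ((ω + n - ‖x‖ ^ 2) / 2)
        = Real.exp ((ω + n - ‖x‖ ^ 2) / 2) * Real.log (Real.exp ((ω + n - ‖x‖ ^ 2) / 2) ^ 2) := by
  refine ⟨contDiff_U ω, fun x => ⟨Real.exp_pos _, ?_⟩⟩
  have hlap : laplacian (fun y : EuclideanSpace ℝ (Fin n) =>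
      Real.exp ((ω + n - ‖y‖ ^ 2) / 2)) x = U n ω x * (‖x‖ ^ 2 - n) := lap_U ω x
  rw [hlap, Real.log_pow, Real.log_exp]
  show -(U n ω x * (‖x‖ ^ 2 - n)) + ω * U n ω x = U n ω x * ((2 : ℕ) * ((ω + n - ‖x‖ ^ 2) / 2))
  push_cast
  ring
end

section
/- Let n ≥ 3 and ω ∈ ℝ. If u : ℝⁿ → ℝ is a C² function with u(x) ≥ 0 for all x, u solves −Δu + ωu = u log u² pointwise on ℝⁿ, and u is not identically zero, then u(x) > 0 for every x ∈ ℝⁿ. -/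
open MeasureTheory Real Filter Topology

section Helpers

variable {n : ℕ}

noncomputable def qf (c : EuclideanSpace ℝ (Fin n)) (x : EuclideanSpace ℝ (Fin n)) : ℝ :=
  ∑ i, (x i - c i)^2

lemma qf_nonneg (c x : EuclideanSpace ℝ (Fin n)) : 0 ≤ qf c x :=
  Finset.sum_nonneg fun i _ => sq_nonneg _

lemma qf_eq_norm (c x : EuclideanSpace ℝ (Fin n)) : qf c x = ‖x - c‖^2 := by
  rw [EuclideanSpace.norm_eq]
  rw [Real.sq_sqrt (by positivity)]
  simp [qf, PiLp.sub_apply, sq_abs]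

lemma contDiff_qf (c : EuclideanSpace ℝ (Fin n)) : ContDiff ℝ 2 (qf c) := by
  apply ContDiff.sum
  intro i _
  exact ((EuclideanSpace.proj i : EuclideanSpace ℝ (Fin n) →L[ℝ] ℝ).contDiff.sub contDiff_const).pow 2

lemma hasFDerivAt_qf (c x : EuclideanSpace ℝ (Fin n)) :
    HasFDerivAt (qf c) (∑ i, (2*(x i - c i)) • (EuclideanSpace.proj i : EuclideanSpace ℝ (Fin n) →L[ℝ] ℝ)) x := by
  have : ∀ i : Fin n, HasFDerivAt (fun y : EuclideanSpace ℝ (Fin n) => (y i - c i)^2)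
      ((2*(x i - c i)) • (EuclideanSpace.proj i : EuclideanSpace ℝ (Fin n) →L[ℝ] ℝ)) x := by
    intro i
    have h1 := (EuclideanSpace.proj i : EuclideanSpace ℝ (Fin n) →L[ℝ] ℝ).hasFDerivAt (x := x)
    have h2 : HasDerivAt (fun t : ℝ => (t - c i)^2) (2*(x i - c i)) (x i) := by
      have := ((hasDerivAt_id (x i)).sub_const (c i)).fun_pow 2
      simpa [mul_comm] using this
    exact h2.comp_hasFDerivAt x h1
  exact HasFDerivAt.fun_sum (fun i _ => this i)

lemma proj_single (i j : Fin n) :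
    (EuclideanSpace.proj i : EuclideanSpace ℝ (Fin n) →L[ℝ] ℝ) (EuclideanSpace.single j 1)
      = if i = j then (1:ℝ) else 0 := by
  rw [PiLp.proj_apply, EuclideanSpace.single_apply]

lemma Dq_apply (c x : EuclideanSpace ℝ (Fin n)) (j : Fin n) :
    (∑ i, (2*(x i - c i)) • (EuclideanSpace.proj i : EuclideanSpace ℝ (Fin n) →L[ℝ] ℝ))
      (EuclideanSpace.single j 1) = 2*(x j - c j) := by
  rw [ContinuousLinearMap.sum_apply]
  have : ∀ i : Fin n, ((2*(x i - c i)) • (EuclideanSpace.proj i : EuclideanSpace ℝ (Fin n) →L[ℝ] ℝ))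
      (EuclideanSpace.single j 1) = if i = j then 2*(x j - c j) else 0 := by
    intro i
    rw [ContinuousLinearMap.smul_apply, proj_single]
    split
    · subst ‹i = j›; simp
    · simp
  rw [Finset.sum_congr rfl (fun i _ => this i), Finset.sum_ite_eq' Finset.univ j]
  simp

noncomputable def vf (β : ℝ) (c : EuclideanSpace ℝ (Fin n)) (x : EuclideanSpace ℝ (Fin n)) : ℝ :=
  Real.exp (-β - β * qf c x)

lemma vf_pos (β : ℝ) (c x : EuclideanSpace ℝ (Fin n)) : 0 < vf β c x := Real.exp_pos _

lemma contDiff_vf (β : ℝ) (c : EuclideanSpace ℝ (Fin n)) : ContDiff ℝ 2 (vf β c) := by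
  have hinner : ContDiff ℝ 2 (fun x : EuclideanSpace ℝ (Fin n) => -β - β * qf c x) :=
    ContDiff.sub contDiff_const (contDiff_const.mul (contDiff_qf c))
  exact (Real.contDiff_exp.of_le le_top).comp hinner

lemma hasFDerivAt_vf (β : ℝ) (c x : EuclideanSpace ℝ (Fin n)) :
    HasFDerivAt (vf β c)
      ((vf β c x) • ((-β) • (∑ i, (2*(x i - c i)) • (EuclideanSpace.proj i : EuclideanSpace ℝ (Fin n) →L[ℝ] ℝ)))) x := by
  have h0 : HasFDerivAt (fun x : EuclideanSpace ℝ (Fin n) => -β - β * qf c x)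
      ((-β) • (∑ i, (2*(x i - c i)) • (EuclideanSpace.proj i : EuclideanSpace ℝ (Fin n) →L[ℝ] ℝ))) x := by
    have h := (((hasFDerivAt_qf c x).const_mul (-β)).const_add (-β))
    have hfun : (fun x : EuclideanSpace ℝ (Fin n) => -β + (-β) * qf c x)
        = fun x : EuclideanSpace ℝ (Fin n) => -β - β * qf c x := by
      funext y; ring
    rw [hfun] at h
    exact h
  exact h0.exp

lemma fderiv_vf_single (β : ℝ) (c x : EuclideanSpace ℝ (Fin n)) (j : Fin n) :
    fderiv ℝ (vf β c) x (EuclideanSpace.single j 1) = (-2*β*(x j - c j)) * vf β c x := by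
  rw [(hasFDerivAt_vf β c x).fderiv]
  rw [ContinuousLinearMap.smul_apply, ContinuousLinearMap.smul_apply, Dq_apply]
  simp [smul_eq_mul]
  ring

lemma laplacian_vf (β : ℝ) (c x : EuclideanSpace ℝ (Fin n)) :
    laplacian (vf β c) x = vf β c x * (4*β^2 * qf c x - 2*β*n) := by
  have key : ∀ j : Fin n,
      fderiv ℝ (fun y => fderiv ℝ (vf β c) y (EuclideanSpace.single j 1)) x (EuclideanSpace.single j 1)
        = vf β c x * (4*β^2*(x j - c j)^2 - 2*β) := by
    intro j
    have hfun : (fun y => fderiv ℝ (vf β c) y (EuclideanSpace.single j 1))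
        = fun y => (-2*β*(y j - c j)) * vf β c y := by
      funext y; exact fderiv_vf_single β c y j
    rw [hfun]
    have h1 : HasFDerivAt (fun y : EuclideanSpace ℝ (Fin n) => -2*β*(y j - c j))
        ((-2*β) • (EuclideanSpace.proj j : EuclideanSpace ℝ (Fin n) →L[ℝ] ℝ)) x := by
      have h0 := (EuclideanSpace.proj j : EuclideanSpace ℝ (Fin n) →L[ℝ] ℝ).hasFDerivAt (x := x)
      have h := (h0.sub_const (c j)).const_mul (-2*β)
      have hs : (-2*β) • ((EuclideanSpace.proj j : EuclideanSpace ℝ (Fin n) →L[ℝ] ℝ) - 0)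
          = (-2*β) • (EuclideanSpace.proj j : EuclideanSpace ℝ (Fin n) →L[ℝ] ℝ) := by simp
      simpa using h
    have h2 := h1.fun_mul (hasFDerivAt_vf β c x)
    rw [h2.fderiv]
    have e1 : (EuclideanSpace.proj j : EuclideanSpace ℝ (Fin n) →L[ℝ] ℝ) (EuclideanSpace.single j 1) = 1 := by
      rw [proj_single]; simp
    rw [ContinuousLinearMap.add_apply, ContinuousLinearMap.smul_apply,
      ContinuousLinearMap.smul_apply, ContinuousLinearMap.smul_apply, Dq_apply]
    simp only [ContinuousLinearMap.smul_apply, proj_single, eq_self_iff_true, if_true, smul_eq_mul]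
    ring
  unfold laplacian
  rw [Finset.sum_congr rfl (fun j _ => key j)]
  rw [← Finset.mul_sum]
  have : ∑ j : Fin n, (4*β^2*(x j - c j)^2 - 2*β) = 4*β^2 * qf c x - 2*β*n := by
    rw [Finset.sum_sub_distrib]
    simp [qf, Finset.mul_sum, Finset.sum_const, mul_comm]
  rw [this]

/-- 1-D second derivative test. -/
lemma second_deriv_nonpos_of_isLocalMax {φ : ℝ → ℝ} (hφ : ContDiff ℝ 2 φ)
    (hmax : IsLocalMax φ 0) : deriv (deriv φ) 0 ≤ 0 := by
  by_contra hpos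
  push_neg at hpos
  have hd1 : ContDiff ℝ 1 (deriv φ) := by
    have := (contDiff_succ_iff_deriv (n := 1)).mp (by exact_mod_cast hφ)
    exact this.2.2
  have hcont : Continuous (deriv (deriv φ)) := by
    have := (contDiff_succ_iff_deriv (n := 0)).mp (by exact_mod_cast hd1)
    exact this.2.2.continuous
  have hd0 : deriv φ 0 = 0 := hmax.deriv_eq_zero
  have hopen : IsOpen {x : ℝ | 0 < deriv (deriv φ) x} := isOpen_lt continuous_const hcont
  obtain ⟨ε, hε, hball⟩ := Metric.isOpen_iff.mp hopen 0 hpos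
  have hmono : StrictMonoOn (deriv φ) (Set.Ioo (-ε) ε) := by
    apply strictMonoOn_of_deriv_pos (convex_Ioo _ _)
    · exact hd1.continuous.continuousOn
    · intro x hx
      rw [interior_Ioo] at hx
      have : x ∈ Metric.ball (0:ℝ) ε := by
        rw [Metric.mem_ball, Real.dist_eq, sub_zero, abs_lt]; exact ⟨hx.1, hx.2⟩
      exact hball this
  have hderivpos : ∀ t ∈ Set.Ioo (0:ℝ) ε, 0 < deriv φ t := by
    intro t ht
    have := hmono (Set.mem_Ioo.mpr ⟨by linarith [ht.2, hε], by linarith [ht.1, ht.2]⟩)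
      (Set.mem_Ioo.mpr ⟨by linarith [ht.1, hε], ht.2⟩) ht.1
    rwa [hd0] at this
  have hmono2 : StrictMonoOn φ (Set.Ico (0:ℝ) ε) := by
    apply strictMonoOn_of_deriv_pos (convex_Ico _ _)
    · exact (hφ.continuous).continuousOn
    · intro x hx
      rw [interior_Ico] at hx
      exact hderivpos x hx
  obtain ⟨δ, hδ, hle⟩ := Metric.eventually_nhds_iff.mp hmax
  set t := min (ε/2) (δ/2) with ht
  have htpos : 0 < t := by positivity
  have h1 : φ 0 < φ t := hmono2 ⟨le_rfl, hε⟩ ⟨htpos.le, by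
      calc t ≤ ε/2 := min_le_left _ _
      _ < ε := by linarith⟩ htpos
  have h2 : φ t ≤ φ 0 := by
    apply hle
    rw [Real.dist_eq, sub_zero, abs_of_pos htpos]
    calc t ≤ δ/2 := min_le_right _ _
    _ < δ := by linarith
  linarith

/-- second derivative along a direction as deriv of deriv of the slice. -/
lemma slice_stuff (u : EuclideanSpace ℝ (Fin n) → ℝ) (hu : ContDiff ℝ 2 u)
    (x w : EuclideanSpace ℝ (Fin n)) :
    ContDiff ℝ 2 (fun t : ℝ => u (x + t • w)) ∧
    deriv (deriv (fun t : ℝ => u (x + t • w))) 0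
      = fderiv ℝ (fun y => fderiv ℝ u y w) x w := by
  have hline : ContDiff ℝ (⊤ : ℕ∞) (fun t : ℝ => x + t • w) :=
    contDiff_const.add (contDiff_id.smul contDiff_const)
  have hlineD : ∀ t : ℝ, HasDerivAt (fun s : ℝ => x + s • w) w t := by
    intro t
    simpa using ((hasDerivAt_id t).smul_const w).const_add x
  constructor
  · exact hu.comp (hline.of_le (WithTop.coe_le_coe.mpr le_top))
  · set g : EuclideanSpace ℝ (Fin n) → ℝ := fun y => fderiv ℝ u y w with hg
    have hgC1 : ContDiff ℝ 1 g := by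
      have hf : ContDiff ℝ 1 (fderiv ℝ u) := (contDiff_succ_iff_fderiv.mp
        (by exact_mod_cast hu)).2.2
      exact (ContinuousLinearMap.apply ℝ ℝ w).contDiff.comp hf
    have hφ' : deriv (fun t : ℝ => u (x + t • w)) = fun t => g (x + t • w) := by
      funext t
      have hD : HasDerivAt (fun t : ℝ => u (x + t • w)) (fderiv ℝ u (x + t • w) w) t := by
        have hF := (hu.differentiable (by norm_num)).differentiableAt
          (x := x + t • w) |>.hasFDerivAt
        exact hF.comp_hasDerivAt t (hlineD t)
      exact hD.deriv
    rw [hφ']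
    have hD2 : HasDerivAt (fun t : ℝ => g (x + t • w)) (fderiv ℝ g x w) 0 := by
      have hF := (hgC1.differentiable one_ne_zero).differentiableAt (x := x + (0:ℝ) • w)
        |>.hasFDerivAt
      have := hF.comp_hasDerivAt 0 (hlineD 0)
      simpa [Function.comp_def] using this
    exact hD2.deriv

lemma laplacian_nonpos_of_isLocalMax {u : EuclideanSpace ℝ (Fin n) → ℝ} (hu : ContDiff ℝ 2 u)
    {x : EuclideanSpace ℝ (Fin n)} (hmax : IsLocalMax u x) : laplacian u x ≤ 0 := by
  apply Finset.sum_nonpos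
  intro i _
  set w := EuclideanSpace.single i (1:ℝ)
  obtain ⟨hC2, heq⟩ := slice_stuff u hu x w
  rw [← heq]
  apply second_deriv_nonpos_of_isLocalMax hC2
  have hcont : Continuous (fun t : ℝ => x + t • w) :=
    (continuous_const.add (continuous_id.smul continuous_const))
  have : Filter.Tendsto (fun t : ℝ => x + t • w) (𝓝 0) (𝓝 x) := by
    have := hcont.tendsto 0
    simpa using this
  have hev := this.eventually hmax
  have h0 : u (x + (0:ℝ) • w) = u x := by simp
  unfold IsLocalMax IsMaxFilter
  simp only [h0]
  exact hev

lemma laplacian_sub {f g : EuclideanSpace ℝ (Fin n) → ℝ} (hf : ContDiff ℝ 2 f)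
    (hg : ContDiff ℝ 2 g) (x : EuclideanSpace ℝ (Fin n)) :
    laplacian (fun y => f y - g y) x = laplacian f x - laplacian g x := by
  unfold laplacian
  rw [← Finset.sum_sub_distrib]
  apply Finset.sum_congr rfl
  intro i _
  set w := EuclideanSpace.single i (1:ℝ)
  have hdf : Differentiable ℝ f := hf.differentiable (by norm_num)
  have hdg : Differentiable ℝ g := hg.differentiable (by norm_num)
  have h1 : (fun y => fderiv ℝ (fun z => f z - g z) y w)
      = fun y => fderiv ℝ f y w - fderiv ℝ g y w := by
    funext y
    rw [fderiv_fun_sub (hdf y) (hdg y)]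
    simp
  rw [h1]
  have hFf : ContDiff ℝ 1 (fun y => fderiv ℝ f y w) :=
    (ContinuousLinearMap.apply ℝ ℝ w).contDiff.comp
      (contDiff_succ_iff_fderiv.mp (by exact_mod_cast hf)).2.2
  have hFg : ContDiff ℝ 1 (fun y => fderiv ℝ g y w) :=
    (ContinuousLinearMap.apply ℝ ℝ w).contDiff.comp
      (contDiff_succ_iff_fderiv.mp (by exact_mod_cast hg)).2.2
  rw [fderiv_fun_sub ((hFf.differentiable one_ne_zero) x) ((hFg.differentiable one_ne_zero) x)]
  simp

/-- strict monotonicity of `s ↦ ω s − s log s²` on `[0, e^{(ω−2)/2}]`. -/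
lemma gmono (ω a b : ℝ) (ha : 0 ≤ a) (hab : a < b) (hb : b ≤ Real.exp ((ω-2)/2)) :
    ω * a - a * Real.log (a^2) < ω * b - b * Real.log (b^2) := by
  have hbpos : 0 < b := lt_of_le_of_lt ha hab
  have key : ∀ s : ℝ, 0 < s → Real.log (s^2) = 2 * Real.log s := by
    intro s hs
    rw [sq, Real.log_mul hs.ne' hs.ne']; ring
  rcases eq_or_lt_of_le ha with h0 | hapos
  · rw [← h0]
    simp only [zero_mul, mul_zero, sub_zero, Real.log_zero]
    rw [key b hbpos]
    have hlogb : Real.log b ≤ (ω-2)/2 := by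
      calc Real.log b ≤ Real.log (Real.exp ((ω-2)/2)) := Real.log_le_log hbpos hb
      _ = (ω-2)/2 := Real.log_exp _
    nlinarith [hbpos]
  · set g : ℝ → ℝ := fun s => ω * s - s * Real.log (s^2) with hgdef
    have hmono : StrictMonoOn g (Set.Icc a b) := by
      apply strictMonoOn_of_deriv_pos (convex_Icc _ _)
      · apply ContinuousOn.sub (continuousOn_const.mul continuousOn_id)
        apply ContinuousOn.mul continuousOn_id
        apply ContinuousOn.log (continuousOn_pow 2)
        intro s hs
        have : 0 < s := lt_of_lt_of_le hapos hs.1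
        positivity
      · intro s hs
        rw [interior_Icc] at hs
        have hspos : 0 < s := lt_trans hapos hs.1
        have hD : HasDerivAt g (ω - (Real.log (s^2) + 2)) s := by
          have h1 : HasDerivAt (fun t : ℝ => ω * t) ω s := by
            simpa using (hasDerivAt_id s).const_mul ω
          have h2 : HasDerivAt (fun t : ℝ => t * Real.log (t^2)) (Real.log (s^2) + 2) s := by
            have hl : HasDerivAt (fun t : ℝ => Real.log (t^2)) (2*s/(s^2)) s := by
              have hp : HasDerivAt (fun t : ℝ => t^2) (2*s) s := by
                simpa [mul_comm] using (hasDerivAt_pow 2 s)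
              exact hp.log (by positivity)
            have hmul := (hasDerivAt_id s).fun_mul hl
            have hval : (1:ℝ) * Real.log (s^2) + s * (2*s/s^2) = Real.log (s^2) + 2 := by
              field_simp
            rw [← hval]
            simpa using hmul
          exact h1.sub h2
        rw [hD.deriv]
        have hlogs : Real.log s < (ω-2)/2 := by
          have : Real.log s < Real.log (Real.exp ((ω-2)/2)) := by
            apply Real.log_lt_log hspos
            exact lt_of_lt_of_le hs.2 hb
          rwa [Real.log_exp] at this
        rw [key s hspos]
        linarith
    exact hmono (Set.mem_Icc.mpr ⟨le_rfl, hab.le⟩) (Set.mem_Icc.mpr ⟨hab.le, le_rfl⟩) hab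


lemma le_of_sq_le_sq' {a r : ℝ} (ha : 0 ≤ a) (hr : 0 ≤ r) (h : a^2 ≤ r^2) : a ≤ r := by
  nlinarith

end Helpers

set_option maxHeartbeats 1000000 in
/-- Every nonnegative nontrivial `C²` solution of `−Δu + ωu = u log u²` is strictly
positive. -/
theorem positivity_nonneg_solution (n : ℕ) (hn : 3 ≤ n) (ω : ℝ)
    (u : EuclideanSpace ℝ (Fin n) → ℝ) (hu : ContDiff ℝ 2 u)
    (hnonneg : ∀ x, 0 ≤ u x)
    (heq : ∀ x, -(laplacian u x) + ω * u x = u x * Real.log ((u x) ^ 2))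
    (hnontriv : u ≠ 0) :
    ∀ x, 0 < u x := by
  -- find a point where u is positive
  obtain ⟨x₁, hx₁⟩ : ∃ x₁, u x₁ ≠ 0 := by
    by_contra hc
    push_neg at hc
    exact hnontriv (funext fun x => hc x)
  have hx₁pos : 0 < u x₁ := lt_of_le_of_ne (hnonneg x₁) (Ne.symm hx₁)
  set δ : ℝ := u x₁ / 2 with hδdef
  have hδpos : 0 < δ := by positivity
  -- a ball where u ≥ δ
  have hopen : IsOpen {y | δ < u y} := isOpen_lt continuous_const hu.continuous
  obtain ⟨ε, hεpos, hball⟩ := Metric.isOpen_iff.mp hopen x₁ (by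
    simp only [Set.mem_setOf_eq, hδdef]; linarith)
  set r : ℝ := ε / 2 with hrdef
  have hrpos : 0 < r := by positivity
  have hballr : ∀ y, dist y x₁ ≤ r → δ ≤ u y := by
    intro y hy
    have : y ∈ Metric.ball x₁ ε := by
      rw [Metric.mem_ball]; linarith
    exact (hball this).le
  -- choose β
  set β : ℝ := max 1 (max ω (max (2 - ω) (max (-Real.log δ) (2*(n+2)/r^2)))) with hβdef
  have hβ1 : 1 ≤ β := le_max_left _ _
  have hβpos : 0 < β := lt_of_lt_of_le one_pos hβ1
  have hβω : ω ≤ β := le_trans (le_max_left _ _) (le_max_right _ _)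
  have hβ2ω : 2 - ω ≤ β :=
    le_trans (le_trans (le_max_left _ _) (le_max_right _ _)) (le_max_right _ _)
  have hβδ : -Real.log δ ≤ β :=
    le_trans (le_trans (le_trans (le_max_left _ _) (le_max_right _ _)) (le_max_right _ _))
      (le_max_right _ _)
  have hβr : 2*(n+2)/r^2 ≤ β :=
    le_trans (le_trans (le_trans (le_max_right _ _) (le_max_right _ _)) (le_max_right _ _))
      (le_max_right _ _)
  set s : ℝ := (n+2)/β with hsdef
  have hnpos : (0:ℝ) < n + 2 := by positivity
  have hspos : 0 < s := by positivity
  have hsr : s ≤ r^2/2 := by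
    rw [hsdef, div_le_iff₀ hβpos]
    have h1 : (2*(n+2)/r^2) * (r^2/2) ≤ β * (r^2/2) := by
      apply mul_le_mul_of_nonneg_right hβr
      positivity
    have h2 : (2*(n+2)/r^2) * (r^2/2) = n+2 := by
      field_simp
    calc (n:ℝ)+2 = (2*(n+2)/r^2) * (r^2/2) := h2.symm
    _ ≤ β * (r^2/2) := h1
    _ = r^2/2 * β := by ring
  -- the Gaussian subsolution
  set v : EuclideanSpace ℝ (Fin n) → ℝ := vf β x₁ with hvdef
  have hvC2 : ContDiff ℝ 2 v := contDiff_vf β x₁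
  have hvpos : ∀ x, 0 < v x := vf_pos β x₁
  have hvbound : ∀ x, v x ≤ Real.exp (-β) := by
    intro x
    apply Real.exp_le_exp.mpr
    have := qf_nonneg x₁ x
    nlinarith [hβpos]
  have hexpδ : Real.exp (-β) ≤ δ := by
    calc Real.exp (-β) ≤ Real.exp (Real.log δ) := Real.exp_le_exp.mpr (by linarith)
    _ = δ := Real.exp_log hδpos
  have hexpω : Real.exp (-β) ≤ Real.exp ((ω-2)/2) := by
    apply Real.exp_le_exp.mpr
    rcases le_or_gt 0 (2-ω) with h | h
    · linarith
    · linarith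
  -- log of v squared
  have hlogv : ∀ x, Real.log ((v x)^2) = 2*(-β - β * qf x₁ x) := by
    intro x
    have : (v x)^2 = Real.exp (2*(-β - β * qf x₁ x)) := by
      rw [hvdef]
      unfold vf
      rw [sq, ← Real.exp_add]
      ring_nf
    rw [this, Real.log_exp]
  -- subsolution inequality
  have hsubsol : ∀ x, s ≤ qf x₁ x →
      ω * v x - v x * Real.log ((v x)^2) ≤ laplacian v x := by
    intro x hq
    rw [laplacian_vf, hlogv]
    have hqx : 0 ≤ qf x₁ x := qf_nonneg x₁ x
    have hcoef : ω + 2*β + 2*β*(qf x₁ x) ≤ 4*β^2*(qf x₁ x) - 2*β*n := by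
      have hq' : (n+2) ≤ β * qf x₁ x := by
        rw [hsdef, div_le_iff₀ hβpos] at hq
        linarith [hq]
      nlinarith [hβ1, hβω, hq', hβpos, hqx, hn]
    have hvx : 0 < v x := hvpos x
    nlinarith [hvx, hcoef]
  -- main comparison claim
  have hcomp : ∀ x, s ≤ qf x₁ x → v x ≤ u x := by
    by_contra hc
    push_neg at hc
    obtain ⟨p, hps, hpv⟩ := hc
    set h : EuclideanSpace ℝ (Fin n) → ℝ := fun y => v y - u y with hhdef
    have hhp : 0 < h p := by simp [hhdef]; linarith
    have hhcont : Continuous h := hvC2.continuous.sub hu.continuous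
    have hqcont : Continuous (qf x₁) := (contDiff_qf x₁).continuous
    set K : Set (EuclideanSpace ℝ (Fin n)) := {x | s ≤ qf x₁ x ∧ h p ≤ h x} with hKdef
    have hKclosed : IsClosed K := by
      apply IsClosed.inter
      · exact isClosed_le continuous_const hqcont
      · exact isClosed_le continuous_const hhcont
    have hKbounded : Bornology.IsBounded K := by
      have hsub : K ⊆ Metric.closedBall x₁ (Real.sqrt ((-β - Real.log (h p))/β)) := by
        intro x hx
        have hhx : h p ≤ h x := hx.2
        have hvx : h x ≤ v x := by
          simp only [hhdef]
          linarith [hnonneg x]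
        have : Real.log (h p) ≤ Real.log (v x) :=
          Real.log_le_log hhp (le_trans hhx hvx)
        have hlogvx : Real.log (v x) = -β - β * qf x₁ x := by
          rw [hvdef]; unfold vf; rw [Real.log_exp]
        rw [hlogvx] at this
        have hqb : qf x₁ x ≤ (-β - Real.log (h p))/β := by
          rw [le_div_iff₀ hβpos]
          nlinarith [this]
        rw [Metric.mem_closedBall, dist_eq_norm]
        have hnorm : ‖x - x₁‖^2 = qf x₁ x := (qf_eq_norm x₁ x).symm
        have h1 : ‖x - x₁‖^2 ≤ (-β - Real.log (h p))/β := by rw [hnorm]; exact hqb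
        calc ‖x - x₁‖ = Real.sqrt (‖x - x₁‖^2) := by
              rw [Real.sqrt_sq (norm_nonneg _)]
        _ ≤ Real.sqrt ((-β - Real.log (h p))/β) := Real.sqrt_le_sqrt h1
      exact Bornology.IsBounded.subset Metric.isBounded_closedBall hsub
    have hKcompact : IsCompact K := Metric.isCompact_of_isClosed_isBounded hKclosed hKbounded
    have hKne : K.Nonempty := ⟨p, ⟨hps, le_rfl⟩⟩
    obtain ⟨z, hzK, hzmax⟩ := hKcompact.exists_isMaxOn hKne hhcont.continuousOn
    -- z is a max of h on all of {s ≤ qf}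
    have hglobal : ∀ y, s ≤ qf x₁ y → h y ≤ h z := by
      intro y hy
      rcases le_or_gt (h p) (h y) with hcase | hcase
      · exact hzmax ⟨hy, hcase⟩
      · calc h y ≤ h p := hcase.le
        _ ≤ h z := hzK.2
    have hhz : 0 < h z := lt_of_lt_of_le hhp hzK.2
    -- strictness: qf x₁ z > s
    have hstrict : s < qf x₁ z := by
      rcases lt_or_eq_of_le hzK.1 with hlt | heqz
      · exact hlt
      · exfalso
        -- z on the sphere: qf = s ≤ r²/2 < r², so in the ball where u ≥ δ
        have hzball : dist z x₁ ≤ r := by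
          rw [dist_eq_norm]
          have hnz : ‖z - x₁‖^2 = qf x₁ z := (qf_eq_norm x₁ z).symm
          have hle : ‖z - x₁‖^2 ≤ r^2 := by
            rw [hnz, ← heqz]
            nlinarith [hsr, hrpos]
          exact le_of_sq_le_sq' (norm_nonneg _) hrpos.le hle
        have huz : δ ≤ u z := hballr z hzball
        have hvz : v z ≤ δ := le_trans (hvbound z) hexpδ
        have : h z ≤ 0 := by simp only [hhdef]; linarith
        linarith
    -- z is a local max of h
    have hlocmax : IsLocalMax h z := by
      have hopen2 : IsOpen {y | s < qf x₁ y} := isOpen_lt continuous_const hqcont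
      have hmem : {y | s < qf x₁ y} ∈ 𝓝 z := hopen2.mem_nhds hstrict
      apply Filter.eventually_of_mem hmem
      intro y hy
      exact hglobal y hy.le
    -- Laplacian comparison at z
    have hlap : laplacian h z ≤ 0 := laplacian_nonpos_of_isLocalMax (hvC2.sub hu) hlocmax
    have hlapsub : laplacian h z = laplacian v z - laplacian u z := laplacian_sub hvC2 hu z
    have hlapu : laplacian u z = ω * u z - u z * Real.log ((u z)^2) := by
      have := heq z
      linarith
    have hsub := hsubsol z hstrict.le
    have huvz : u z < v z := by
      have : 0 < v z - u z := hhz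
      linarith
    have hvzb : v z ≤ Real.exp ((ω-2)/2) := le_trans (hvbound z) hexpω
    have hgm := gmono ω (u z) (v z) (hnonneg z) huvz hvzb
    -- contradiction
    rw [hlapsub] at hlap
    linarith
  -- conclude
  intro x
  rcases le_or_gt s (qf x₁ x) with hcase | hcase
  · exact lt_of_lt_of_le (hvpos x) (hcomp x hcase)
  · have hxball : dist x x₁ ≤ r := by
      rw [dist_eq_norm]
      have : ‖x - x₁‖^2 = qf x₁ x := (qf_eq_norm x₁ x).symm
      have hle : ‖x - x₁‖^2 ≤ r^2 := by
        rw [this]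
        nlinarith [hsr, hrpos, hcase]
      nlinarith [norm_nonneg (x - x₁), hrpos]
    exact lt_of_lt_of_le hδpos (hballr x hxball)
end

section
/- Let n ≥ 3. If ψ : (0,∞) → ℝ is a C² function with ∫₀^∞ (ψ(r)² + ψ′(r)²) dr < ∞ that satisfies the ordinary differential equation −ψ″(r) − ((n−1)/r)ψ′(r) + (r² + (n−1)/r² − n − 2)ψ(r) = 0 for all r > 0, then there exists c ∈ ℝ such that ψ(r) = c · r·exp(−r²/2) for all r > 0; that is, the H¹(ℝ₊) solutions of A₁(ψ) = 0 are exactly the multiples of 𝔤′(r) = −r·exp(−r²/2), where 𝔤(r) = exp(−r²/2). -/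
open MeasureTheory Real Filter Set

/-!
`φ(r) = r e^{-r²/2}` solves the equation, so by Abel's identity `r^{n-1} (ψ' φ - ψ φ')` is a
constant `C`. By Cauchy–Schwarz, `C ≠ 0` would force `ψ² + ψ'² ≥ C² e^{r²} / r^{2n+2}` for
`r ≥ 1`, which is not integrable. Hence the Wronskian vanishes and `ψ / φ` is constant.
-/

theorem eq_of_hasDerivAt_zero_on_Ioi {f : ℝ → ℝ} {a : ℝ} (hf : ∀ x ∈ Ioi a, HasDerivAt f 0 x)
    {x y : ℝ} (hx : x ∈ Ioi a) (hy : y ∈ Ioi a) : f x = f y :=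
  isOpen_Ioi.is_const_of_deriv_eq_zero isPreconnected_Ioi
    (fun z hz => (hf z hz).differentiableAt.differentiableWithinAt) (fun z hz => (hf z hz).deriv)
    hx hy

theorem not_integrableOn_Ioi_of_tendsto_atTop {f g : ℝ → ℝ} {a : ℝ}
    (hf : Tendsto f atTop atTop) (hfg : f ≤ᶠ[atTop] g) : ¬ IntegrableOn g (Ioi a) := by
  intro hg
  obtain ⟨R, hR⟩ := eventually_atTop.1 ((hf.eventually_ge_atTop 1).and hfg)
  have hone : IntegrableOn (fun _ => (1 : ℝ)) (Ioi (max a R)) := by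
    refine Integrable.mono' (hg.mono_set (Ioi_subset_Ioi (le_max_left a R)))
      aestronglyMeasurable_const (ae_restrict_of_forall_mem measurableSet_Ioi fun x hx => ?_)
    obtain ⟨h1, h2⟩ := hR x ((le_max_right a R).trans hx.le)
    simpa using h1.trans h2
  simp [integrableOn_const_iff, Real.volume_Ioi] at hone

section Wronskian

variable {u u' u'' v v' v'' q : ℝ → ℝ} {d : ℝ}

theorem hasDerivAt_wronskian {x : ℝ} (hu : HasDerivAt u (u' x) x) (hu' : HasDerivAt u' (u'' x) x)
    (hv : HasDerivAt v (v' x) x) (hv' : HasDerivAt v' (v'' x) x) :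
    HasDerivAt (fun r => u' r * v r - u r * v' r) (u'' x * v x - u x * v'' x) x := by
  refine ((hu'.mul hv).sub (hu.mul hv')).congr_deriv ?_
  ring

/-- Abel's identity for `y'' + (d / r) y' = q y` on `(0, ∞)`. -/
theorem rpow_mul_wronskian_eq
    (hu : ∀ r ∈ Ioi 0, HasDerivAt u (u' r) r) (hu' : ∀ r ∈ Ioi 0, HasDerivAt u' (u'' r) r)
    (hv : ∀ r ∈ Ioi 0, HasDerivAt v (v' r) r) (hv' : ∀ r ∈ Ioi 0, HasDerivAt v' (v'' r) r)
    (hu_ode : ∀ r ∈ Ioi 0, u'' r = q r * u r - d / r * u' r)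
    (hv_ode : ∀ r ∈ Ioi 0, v'' r = q r * v r - d / r * v' r) :
    ∀ r ∈ Ioi 0, r ^ d * (u' r * v r - u r * v' r) = u' 1 * v 1 - u 1 * v' 1 := by
  intro r hr
  have hderiv : ∀ x ∈ Ioi (0 : ℝ),
      HasDerivAt (fun r => r ^ d * (u' r * v r - u r * v' r)) 0 x := by
    intro x hx
    have hx0 : x ≠ 0 := (mem_Ioi.1 hx).ne'
    refine ((hasDerivAt_rpow_const (p := d) (Or.inl hx0)).mul
      (hasDerivAt_wronskian (hu x hx) (hu' x hx) (hv x hx) (hv' x hx))).congr_deriv ?_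
    rw [hu_ode x hx, hv_ode x hx, rpow_sub_one hx0]
    field_simp
    ring
  simpa using eq_of_hasDerivAt_zero_on_Ioi hderiv hr (mem_Ioi.2 one_pos)

theorem exists_eq_const_mul_of_wronskian_eq_zero
    (hu : ∀ r ∈ Ioi 0, HasDerivAt u (u' r) r) (hv : ∀ r ∈ Ioi 0, HasDerivAt v (v' r) r)
    (hv_pos : ∀ r ∈ Ioi 0, 0 < v r) (hW : ∀ r ∈ Ioi 0, u' r * v r - u r * v' r = 0) :
    ∃ c : ℝ, ∀ r ∈ Ioi 0, u r = c * v r := by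
  have hderiv : ∀ x ∈ Ioi (0 : ℝ), HasDerivAt (fun r => u r / v r) 0 x := fun x hx => by
    simpa [hW x hx] using (hu x hx).fun_div (hv x hx) (hv_pos x hx).ne'
  refine ⟨u 1 / v 1, fun r hr => ?_⟩
  rw [← eq_of_hasDerivAt_zero_on_Ioi hderiv hr (mem_Ioi.2 one_pos),
    div_mul_cancel₀ _ (hv_pos r hr).ne']

end Wronskian

/-- `gaussMode = -𝔤′`, the kernel element of `A₁` generated by translations of the Gausson. -/
noncomputable def gaussMode (r : ℝ) : ℝ := r * exp (-r ^ 2 / 2)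

noncomputable def gaussModeDeriv (r : ℝ) : ℝ := (1 - r ^ 2) * exp (-r ^ 2 / 2)

theorem hasDerivAt_exp_neg_sq_half (r : ℝ) :
    HasDerivAt (fun r => exp (-r ^ 2 / 2)) (-r * exp (-r ^ 2 / 2)) r := by
  have h : HasDerivAt (fun r : ℝ => -r ^ 2 / 2) (-r) r := by
    refine ((hasDerivAt_pow 2 r).fun_neg.div_const 2).congr_deriv ?_
    ring
  simpa [mul_comm] using h.exp

theorem hasDerivAt_gaussMode (r : ℝ) : HasDerivAt gaussMode (gaussModeDeriv r) r := by
  refine ((hasDerivAt_id r).fun_mul (hasDerivAt_exp_neg_sq_half r)).congr_deriv ?_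
  simp only [gaussModeDeriv, id]
  ring

theorem hasDerivAt_gaussModeDeriv (r : ℝ) :
    HasDerivAt gaussModeDeriv ((r ^ 3 - 3 * r) * exp (-r ^ 2 / 2)) r := by
  refine (((hasDerivAt_pow 2 r).const_sub 1).fun_mul (hasDerivAt_exp_neg_sq_half r)).congr_deriv ?_
  ring

theorem gaussMode_pos {r : ℝ} (hr : 0 < r) : 0 < gaussMode r :=
  mul_pos hr (exp_pos _)

theorem gaussMode_ode (n : ℝ) {r : ℝ} (hr : r ≠ 0) :
    (r ^ 3 - 3 * r) * exp (-r ^ 2 / 2) =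
      (r ^ 2 + (n - 1) / r ^ 2 - n - 2) * gaussMode r - (n - 1) / r * gaussModeDeriv r := by
  simp only [gaussMode, gaussModeDeriv]
  field_simp
  ring

theorem sq_wronskian_gaussMode_le (a b : ℝ) {r : ℝ} (hr : 1 ≤ r) :
    (b * gaussMode r - a * gaussModeDeriv r) ^ 2 ≤ (a ^ 2 + b ^ 2) * (r ^ 4 * exp (-r ^ 2)) := by
  have hexp : exp (-r ^ 2 / 2) ^ 2 = exp (-r ^ 2) := by
    rw [← exp_nat_mul]; ring_nf
  have hmode : gaussMode r ^ 2 + gaussModeDeriv r ^ 2 ≤ r ^ 4 * exp (-r ^ 2) := by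
    simp only [gaussMode, gaussModeDeriv, mul_pow, hexp, ← add_mul]
    gcongr
    nlinarith
  calc (b * gaussMode r - a * gaussModeDeriv r) ^ 2
      ≤ (b ^ 2 + a ^ 2) * (gaussMode r ^ 2 + gaussModeDeriv r ^ 2) := by
        rw [sq_add_sq_mul_sq_add_sq]; nlinarith [sq_nonneg (b * gaussModeDeriv r + a * gaussMode r)]
    _ ≤ (a ^ 2 + b ^ 2) * (r ^ 4 * exp (-r ^ 2)) := by
        rw [add_comm (b ^ 2)]; gcongr

theorem wronskian_gaussMode_eq_zero {ψ ψ' : ℝ → ℝ} {d C : ℝ}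
    (hint : IntegrableOn (fun r => ψ r ^ 2 + ψ' r ^ 2) (Ioi 0))
    (hC : ∀ r ∈ Ioi 0, r ^ d * (ψ' r * gaussMode r - ψ r * gaussModeDeriv r) = C) : C = 0 := by
  by_contra hC0
  refine not_integrableOn_Ioi_of_tendsto_atTop
    ((tendsto_exp_div_rpow_atTop (2 * d + 4)).const_mul_atTop (by positivity : 0 < C ^ 2)) ?_ hint
  filter_upwards [eventually_ge_atTop 1] with r hr
  have hr0 : 0 < r := by linarith
  have hC2 : C ^ 2 = r ^ (2 * d) * (ψ' r * gaussMode r - ψ r * gaussModeDeriv r) ^ 2 := by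
    rw [← hC r hr0, mul_pow, ← rpow_natCast (r ^ d), ← rpow_mul hr0.le, mul_comm d]
    norm_num
  set W := ψ' r * gaussMode r - ψ r * gaussModeDeriv r
  have hpow : r ^ (2 * d + 4) = r ^ (2 * d) * r ^ 4 := by
    rw [rpow_add hr0]
    norm_cast
  have hexp : exp r * exp (-r ^ 2) ≤ 1 := by
    rw [← exp_add]
    exact exp_le_one_iff.2 (by nlinarith)
  rw [hpow, mul_div_assoc', div_le_iff₀ (by positivity), hC2]
  calc r ^ (2 * d) * W ^ 2 * exp r
      ≤ r ^ (2 * d) * ((ψ r ^ 2 + ψ' r ^ 2) * (r ^ 4 * exp (-r ^ 2))) * exp r := by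
        gcongr
        exact sq_wronskian_gaussMode_le (ψ r) (ψ' r) hr
    _ = (ψ r ^ 2 + ψ' r ^ 2) * (r ^ (2 * d) * r ^ 4) * (exp r * exp (-r ^ 2)) := by ring
    _ ≤ (ψ r ^ 2 + ψ' r ^ 2) * (r ^ (2 * d) * r ^ 4) :=
        mul_le_of_le_one_right (by positivity) hexp

theorem radial_mode_one_general (n : ℕ)
    (ψ ψ' ψ'' : ℝ → ℝ)
    (hd1 : ∀ r ∈ Ioi (0 : ℝ), HasDerivAt ψ (ψ' r) r)
    (hd2 : ∀ r ∈ Ioi (0 : ℝ), HasDerivAt ψ' (ψ'' r) r)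
    (hint : IntegrableOn (fun r => (ψ r) ^ 2 + (ψ' r) ^ 2) (Ioi (0 : ℝ)))
    (hode : ∀ r ∈ Ioi (0 : ℝ),
      -(ψ'' r) - ((n - 1) / r) * ψ' r + (r ^ 2 + (n - 1) / r ^ 2 - n - 2) * ψ r = 0) :
    ∃ c : ℝ, ∀ r ∈ Ioi (0 : ℝ), ψ r = c * (r * Real.exp (-r ^ 2 / 2)) := by
  have hψ_ode : ∀ r ∈ Ioi (0 : ℝ),
      ψ'' r = (r ^ 2 + (n - 1) / r ^ 2 - n - 2) * ψ r - (n - 1) / r * ψ' r :=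
    fun r hr => by linarith [hode r hr]
  have habel := rpow_mul_wronskian_eq hd1 hd2 (fun r _ => hasDerivAt_gaussMode r)
    (fun r _ => hasDerivAt_gaussModeDeriv r) hψ_ode (fun r hr => gaussMode_ode n hr.ne')
  have hW_zero := wronskian_gaussMode_eq_zero hint habel
  refine exists_eq_const_mul_of_wronskian_eq_zero hd1 (fun r _ => hasDerivAt_gaussMode r)
    (fun r hr => gaussMode_pos hr) fun r hr => ?_
  have h := habel r hr
  rw [hW_zero] at h
  exact (mul_eq_zero.1 h).resolve_left (rpow_pos_of_pos hr _).ne'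

/-- Claim 2 in the proof of nondegeneracy: for `k = 1` (`λ₁ = n − 1`), the `H¹(ℝ₊)`
solutions of `−ψ″ − ((n−1)/r)ψ′ + (r² + (n−1)/r² − n − 2)ψ = 0` are exactly the multiples
of `𝔤′(r) = −r exp(−r²/2)`. -/
theorem radial_mode_one (n : ℕ) (hn : 3 ≤ n)
    (ψ ψ' ψ'' : ℝ → ℝ)
    (hd1 : ∀ r ∈ Ioi (0 : ℝ), HasDerivAt ψ (ψ' r) r)
    (hd2 : ∀ r ∈ Ioi (0 : ℝ), HasDerivAt ψ' (ψ'' r) r)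
    (hc2 : ContinuousOn ψ'' (Ioi (0 : ℝ)))
    (hint : IntegrableOn (fun r => (ψ r) ^ 2 + (ψ' r) ^ 2) (Ioi (0 : ℝ)))
    (hode : ∀ r ∈ Ioi (0 : ℝ),
      -(ψ'' r) - ((n - 1) / r) * ψ' r + (r ^ 2 + (n - 1) / r ^ 2 - n - 2) * ψ r = 0) :
    ∃ c : ℝ, ∀ r ∈ Ioi (0 : ℝ), ψ r = c * (r * Real.exp (-r ^ 2 / 2)) :=
  radial_mode_one_general n ψ ψ' ψ'' hd1 hd2 hint hode
end

section
/- Let n ≥ 3 and let k ≥ 2 be an integer, with λ_k = k(k+n−2). If ψ : (0,∞) → ℝ is a C² function with ∫₀^∞ (ψ(r)² + ψ′(r)²) dr < ∞ that satisfies −ψ″(r) − ((n−1)/r)ψ′(r) + (r² + λ_k/r² − n − 2)ψ(r) = 0 for all r > 0, then ψ is identically zero. -/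
open MeasureTheory Real Filter Set Topology

/-!
Let `ψ₀ = r ^ k * exp (-r ^ 2 / 2)`, so that `ψ₀' / ψ₀ = k / r - r`. Along a solution `ψ`, the
function `B = r ^ (n - 1) * ψ * (ψ' - (k / r - r) * ψ)` has derivative
`r ^ (n - 1) * ((ψ' - (k / r - r) * ψ) ^ 2 + (2 * k - 2) * ψ ^ 2) ≥ 0`, so `B` is monotone.
Since `ψ² + ψ'²` is integrable, `r * (ψ² + ψ'²)` gets arbitrarily small along sequences tending
to `0` and to `∞`. Near `0` this makes `B` small because `n ≥ 3`; near `∞` it does so together with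
the bound `|ψ r| ≤ C * exp (-r)`, which the maximum principle gives once the potential exceeds `1`.
A monotone function that is small near both ends vanishes, hence so does `B'`, and `k ≥ 2` forces
`ψ = 0`.
-/

theorem exists_lt_of_integrableOn_of_not_integrableOn {α : Type*} [MeasurableSpace α]
    {μ : Measure α} {f g : α → ℝ} {s : Set α} (hs : MeasurableSet s)
    (hf : IntegrableOn f s μ) (hg : ¬IntegrableOn g s μ)
    (hgm : AEStronglyMeasurable g (μ.restrict s)) (hg0 : ∀ x ∈ s, 0 ≤ g x) :
    ∃ x ∈ s, f x < g x := by
  by_contra! h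
  refine hg (hf.mono' hgm ?_)
  filter_upwards [ae_restrict_mem hs] with x hx
  rw [norm_of_nonneg (hg0 x hx)]
  exact h x hx

theorem not_integrableOn_const_mul_inv_Ioo {ε T : ℝ} (hε : ε ≠ 0) (hT : 0 < T) :
    ¬IntegrableOn (fun r => ε * r⁻¹) (Ioo 0 T) := by
  rw [IntegrableOn, integrable_const_mul_iff hε.isUnit, ← IntegrableOn,
    ← intervalIntegrable_iff_integrableOn_Ioo_of_le hT.le, intervalIntegrable_inv_iff]
  simp [hT.ne, hT.le]

theorem not_integrableOn_const_mul_inv_Ioi {ε T : ℝ} (hε : ε ≠ 0) :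
    ¬IntegrableOn (fun r => ε * r⁻¹) (Ioi T) := by
  rw [IntegrableOn, integrable_const_mul_iff hε.isUnit]
  exact not_integrableOn_Ioi_inv

section

variable {f : ℝ → ℝ} {ε : ℝ}

theorem frequently_mul_lt_nhdsGT_of_integrableOn (hf : IntegrableOn f (Ioi 0)) (hε : 0 < ε) :
    ∃ᶠ r in 𝓝[>] 0, r * f r < ε := by
  rw [(nhdsGT_basis 0).frequently_iff]
  intro T hT
  obtain ⟨r, hr, hlt⟩ := exists_lt_of_integrableOn_of_not_integrableOn measurableSet_Ioo
    (hf.mono_set Ioo_subset_Ioi_self) (not_integrableOn_const_mul_inv_Ioo hε.ne' hT)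
    (by fun_prop) (fun r hr => by have := hr.1; positivity)
  exact ⟨r, hr, by rwa [lt_mul_inv_iff₀' hr.1] at hlt⟩

theorem frequently_mul_lt_atTop_of_integrableOn (hf : IntegrableOn f (Ioi 0)) (hε : 0 < ε) :
    ∃ᶠ r in atTop, r * f r < ε := by
  rw [frequently_atTop]
  intro T
  obtain ⟨r, hr, hlt⟩ := exists_lt_of_integrableOn_of_not_integrableOn measurableSet_Ioi
    (hf.mono_set (Ioi_subset_Ioi (le_max_right T 0))) (not_integrableOn_const_mul_inv_Ioi hε.ne')
    (by fun_prop) (fun r hr => mul_nonneg hε.le (inv_nonneg.mpr ((le_max_right T 0).trans hr.le)))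
  have hr0 : 0 < r := (le_max_right T 0).trans_lt hr
  exact ⟨r, (le_max_left T 0).trans hr.le, by rwa [lt_mul_inv_iff₀' hr0] at hlt⟩

end

theorem tendsto_atTop_zero_of_integrableOn_sq_add_sq {ψ ψ' : ℝ → ℝ} {a : ℝ}
    (hψ : ∀ r ∈ Ioi a, HasDerivAt ψ (ψ' r) r)
    (hint : IntegrableOn (fun r => ψ r ^ 2 + ψ' r ^ 2) (Ioi a)) :
    Tendsto ψ atTop (𝓝 0) := by
  have hψm : AEStronglyMeasurable ψ (volume.restrict (Ioi a)) :=
    (HasDerivAt.continuousOn hψ).aestronglyMeasurable measurableSet_Ioi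
  have hψ'm : AEStronglyMeasurable ψ' (volume.restrict (Ioi a)) :=
    (measurable_deriv ψ).aestronglyMeasurable.congr <|
      ae_restrict_of_forall_mem measurableSet_Ioi fun r hr => (hψ r hr).deriv
  have hsq : Tendsto (fun r => ψ r ^ 2) atTop (𝓝 0) := by
    refine tendsto_zero_of_hasDerivAt_of_integrableOn_Ioi (f' := fun r => 2 * ψ r * ψ' r)
      (fun r hr => ((hψ r hr).pow 2).congr_deriv (by ring)) ?_ ?_
    · refine hint.mono' (by fun_prop) (ae_of_all _ fun r => ?_)
      rw [norm_eq_abs, abs_le]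
      constructor <;> nlinarith [sq_nonneg (ψ r + ψ' r), sq_nonneg (ψ r - ψ' r)]
    · refine hint.mono' (by fun_prop) (ae_of_all _ fun r => ?_)
      rw [norm_of_nonneg (sq_nonneg _)]
      nlinarith [sq_nonneg (ψ' r)]
  have habs := hsq.sqrt
  rw [sqrt_zero] at habs
  exact (tendsto_zero_iff_abs_tendsto_zero ψ).mpr (habs.congr fun r => sqrt_sq_eq_abs _)

theorem not_isLocalMax_of_second_deriv_pos {u u' : ℝ → ℝ} {c u'' : ℝ}
    (hu : ∀ᶠ x in 𝓝 c, HasDerivAt u (u' x) x) (hu' : HasDerivAt u' u'' c)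
    (hcrit : u' c = 0) (hpos : 0 < u'') : ¬IsLocalMax u c := by
  intro hmax
  have hderiv : deriv u =ᶠ[𝓝 c] u' := hu.mono fun x hx => hx.deriv
  have hmin : IsLocalMin u c := isLocalMin_of_deriv_deriv_pos
    (by rwa [(hu'.congr_of_eventuallyEq hderiv).deriv]) (by rwa [hderiv.eq_of_nhds])
    hu.self_of_nhds.continuousAt
  have hconst : u =ᶠ[𝓝 c] fun _ => u c :=
    (hmin.and hmax).mono fun x hx => le_antisymm hx.2 hx.1
  have hflat : u' =ᶠ[𝓝 c] fun _ => 0 :=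
    (hu.and hconst.eventuallyEq_nhds).mono fun x hx =>
      hx.1.unique ((hasDerivAt_const x (u c)).congr_of_eventuallyEq hx.2)
  exact hpos.ne' (hu'.unique ((hasDerivAt_const c 0).congr_of_eventuallyEq hflat))

theorem le_zero_of_tendsto_atTop_of_second_deriv_pos {u u' u'' : ℝ → ℝ} {R : ℝ}
    (hu : ∀ r ∈ Ici R, HasDerivAt u (u' r) r) (hu' : ∀ r ∈ Ioi R, HasDerivAt u' (u'' r) r)
    (hR : u R ≤ 0) (hlim : Tendsto u atTop (𝓝 0))
    (hpos : ∀ r ∈ Ioi R, u' r = 0 → 0 < u r → 0 < u'' r) :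
    ∀ r ∈ Ici R, u r ≤ 0 := by
  intro r hr
  by_contra! hur
  obtain ⟨T, hT⟩ := eventually_atTop.mp (hlim.eventually_lt_const hur)
  have hrT : r ≤ max T r := le_max_right T r
  obtain ⟨c, hc, hcmax⟩ := isCompact_Icc.exists_isMaxOn (nonempty_Icc.mpr (hr.trans hrT))
    fun x hx => (hu x hx.1).continuousAt.continuousWithinAt
  have huc : 0 < u c := hur.trans_le (hcmax ⟨hr, hrT⟩)
  have hRc : R < c := hc.1.lt_of_ne (by rintro rfl; linarith)
  have hcT : c < max T r := hc.2.lt_of_ne (by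
    rintro rfl
    exact (hT _ (le_max_left T r)).not_ge (hcmax ⟨hr, hrT⟩))
  have hloc : IsLocalMax u c := hcmax.isLocalMax (Icc_mem_nhds hRc hcT)
  have hcrit : u' c = 0 := hloc.hasDerivAt_eq_zero (hu c hc.1)
  refine not_isLocalMax_of_second_deriv_pos ?_ (hu' c hRc) hcrit (hpos c hRc hcrit huc) hloc
  filter_upwards [Ioi_mem_nhds hRc] with x hx using hu x (mem_Ici.mpr (le_of_lt hx))

section Decay

variable {ψ ψ' V : ℝ → ℝ} {a R : ℝ}

theorem le_mul_exp_of_hasDerivAt_of_tendsto {M : ℝ} (ha : 0 ≤ a) (hR : 0 ≤ R)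
    (hV : ∀ r ∈ Ioi R, 1 ≤ V r) (hψ : ∀ r ∈ Ici R, HasDerivAt ψ (ψ' r) r)
    (hψ' : ∀ r ∈ Ioi R, HasDerivAt ψ' (-(a / r) * ψ' r + V r * ψ r) r)
    (hlim : Tendsto ψ atTop (𝓝 0)) (hM : 0 ≤ M) (hψR : ψ R ≤ M) :
    ∀ r ∈ Ici R, ψ r ≤ M * exp (R - r) := by
  have hexp (r : ℝ) : HasDerivAt (fun s => M * exp (R - s)) (-(M * exp (R - r))) r :=
    (((hasDerivAt_id r).const_sub R).exp.const_mul M).congr_deriv (by simp)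
  have hdecay : Tendsto (fun r => M * exp (R - r)) atTop (𝓝 0) := by
    simpa [sub_eq_add_neg, exp_add, mul_assoc] using
      tendsto_exp_neg_atTop_nhds_zero.const_mul (M * exp R)
  refine fun r hr => sub_nonpos.mp <| le_zero_of_tendsto_atTop_of_second_deriv_pos
    (u := fun r => ψ r - M * exp (R - r)) (u' := fun r => ψ' r + M * exp (R - r))
    (u'' := fun r => -(a / r) * ψ' r + V r * ψ r - M * exp (R - r))
    (fun r hr => ((hψ r hr).sub (hexp r)).congr_deriv (sub_neg_eq_add _ _))
    (fun r hr => ((hψ' r hr).add (hexp r)).congr_deriv (by ring))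
    (by simpa using hψR) (by simpa using hlim.sub hdecay) (fun c hc hcrit hpos => ?_) r hr
  have hac : 0 ≤ a / c := div_nonneg ha (hR.trans hc.out.le)
  have hMe : 0 ≤ M * exp (R - c) := by positivity
  nlinarith [hV c hc]

theorem abs_le_mul_exp_of_hasDerivAt_of_tendsto (ha : 0 ≤ a) (hR : 0 ≤ R)
    (hV : ∀ r ∈ Ioi R, 1 ≤ V r) (hψ : ∀ r ∈ Ici R, HasDerivAt ψ (ψ' r) r)
    (hψ' : ∀ r ∈ Ioi R, HasDerivAt ψ' (-(a / r) * ψ' r + V r * ψ r) r)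
    (hlim : Tendsto ψ atTop (𝓝 0)) :
    ∀ r ∈ Ici R, |ψ r| ≤ |ψ R| * exp (R - r) := by
  intro r hr
  refine abs_le.mpr ⟨neg_le.mp ?_, ?_⟩
  · refine le_mul_exp_of_hasDerivAt_of_tendsto (ψ := fun r => -ψ r) (ψ' := fun r => -ψ' r) ha hR hV
      (fun r hr => (hψ r hr).neg) (fun r hr => ((hψ' r hr).neg).congr_deriv (by ring))
      (by simpa using hlim.neg) (abs_nonneg _) (neg_le_abs _) r hr
  · exact le_mul_exp_of_hasDerivAt_of_tendsto ha hR hV hψ hψ' hlim (abs_nonneg _) (le_abs_self _)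
      r hr

end Decay

theorem eq_zero_of_monotoneOn_of_frequently_abs_lt {B : ℝ → ℝ} {a : ℝ}
    (hB : MonotoneOn B (Ioi a)) (hleft : ∀ ε > 0, ∃ᶠ r in 𝓝[>] a, |B r| < ε)
    (hright : ∀ ε > 0, ∃ᶠ r in atTop, |B r| < ε) :
    ∀ r ∈ Ioi a, B r = 0 := by
  intro s hs
  refine le_antisymm (le_of_forall_pos_lt_add fun ε hε => ?_)
    (le_of_forall_pos_lt_add fun ε hε => ?_)
  · obtain ⟨t, ht, hst⟩ := ((hright ε hε).and_eventually (eventually_ge_atTop s)).exists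
    have := hB hs (hs.out.trans_le hst) hst
    linarith [(abs_lt.mp ht).2]
  · obtain ⟨t, ht, hta, hts⟩ := ((hleft ε hε).and_eventually (Ioo_mem_nhdsGT hs)).exists
    have := hB hta hs hts.le
    linarith [(abs_lt.mp ht).1]

theorem hasDerivAt_pow_eq_mul_div (n : ℕ) {r : ℝ} (hr : r ≠ 0) :
    HasDerivAt (fun x => x ^ n) (n * r ^ n / r) r := by
  refine (hasDerivAt_pow n r).congr_deriv ?_
  rcases n with _ | n
  · simp
  · field_simp
    simp [pow_succ]

/-- `r ^ (n - 1) * ψ * (ψ' - (k / r - r) * ψ)`, written without natural subtraction. -/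
noncomputable def radialLyapunov (n : ℕ) (k : ℝ) (ψ ψ' : ℝ → ℝ) (r : ℝ) : ℝ :=
  r ^ n * (ψ r * ψ' r / r - (k / r ^ 2 - 1) * ψ r ^ 2)

section RadialLyapunov

variable {n : ℕ} {k : ℝ} {ψ ψ' : ℝ → ℝ}

theorem hasDerivAt_radialLyapunov {r : ℝ} (hr : 0 < r) (hψ : HasDerivAt ψ (ψ' r) r)
    (hψ' : HasDerivAt ψ'
      (-((n - 1) / r) * ψ' r + (r ^ 2 + k * (k + n - 2) / r ^ 2 - n - 2) * ψ r) r) :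
    HasDerivAt (radialLyapunov n k ψ ψ')
      (r ^ n / r * ((ψ' r - (k / r - r) * ψ r) ^ 2 + (2 * k - 2) * ψ r ^ 2)) r := by
  have hr0 : r ≠ 0 := hr.ne'
  have := (hasDerivAt_pow_eq_mul_div n hr0).mul
    (((hψ.mul hψ').div (hasDerivAt_id r) hr0).sub
      ((((hasDerivAt_const r k).div (hasDerivAt_pow 2 r) (pow_ne_zero 2 hr0)).sub_const 1).mul
        (hψ.pow 2)))
  refine this.congr_deriv ?_
  simp only [Pi.mul_apply, Pi.div_apply, Pi.sub_apply, Pi.pow_apply, id]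
  field_simp
  ring

theorem monotoneOn_radialLyapunov (hk : 1 ≤ k) (hψ : ∀ r ∈ Ioi 0, HasDerivAt ψ (ψ' r) r)
    (hψ' : ∀ r ∈ Ioi 0, HasDerivAt ψ'
      (-((n - 1) / r) * ψ' r + (r ^ 2 + k * (k + n - 2) / r ^ 2 - n - 2) * ψ r) r) :
    MonotoneOn (radialLyapunov n k ψ ψ') (Ioi 0) := by
  have hB r (hr : r ∈ Ioi 0) := hasDerivAt_radialLyapunov (n := n) hr (hψ r hr) (hψ' r hr)
  refine monotoneOn_of_deriv_nonneg (convex_Ioi 0)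
    (fun r hr => (hB r hr).continuousAt.continuousWithinAt) ?_ ?_ <;> rw [interior_Ioi]
  · exact fun r hr => (hB r hr).differentiableAt.differentiableWithinAt
  · intro r hr
    rw [(hB r hr).deriv]
    have hr : 0 < r := hr
    have : 0 ≤ 2 * k - 2 := by linarith
    positivity

theorem abs_radialLyapunov_le_of_le_one (hn : 3 ≤ n) {r : ℝ} (hr : 0 < r) (hr1 : r ≤ 1) :
    |radialLyapunov n k ψ ψ' r| ≤ (|k| + 2) * (r * (ψ r ^ 2 + ψ' r ^ 2)) := by
  set f := ψ r ^ 2 + ψ' r ^ 2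
  have hf : 0 ≤ f := by positivity
  have hr2 : r ^ 2 ≤ r := by nlinarith
  have hprod : |ψ r * ψ' r| ≤ f := by
    rw [abs_le]; constructor <;> nlinarith [sq_nonneg (ψ r + ψ' r), sq_nonneg (ψ r - ψ' r)]
  have hcoef : |k / r ^ 2 - 1| ≤ (|k| + 1) / r ^ 2 := calc
    _ ≤ |k / r ^ 2| + |1| := abs_sub _ _
    _ ≤ |k| / r ^ 2 + 1 / r ^ 2 := by
      rw [abs_div, abs_one, abs_of_pos (pow_pos hr 2)]
      gcongr
      exact one_le_one_div (pow_pos hr 2) (pow_le_one₀ hr.le hr1)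
    _ = _ := by ring
  have hC : |ψ r * ψ' r / r - (k / r ^ 2 - 1) * ψ r ^ 2| ≤ (|k| + 2) * f / r ^ 2 := calc
    _ ≤ |ψ r * ψ' r / r| + |(k / r ^ 2 - 1) * ψ r ^ 2| := abs_sub _ _
    _ ≤ f / r ^ 2 + (|k| + 1) / r ^ 2 * f := by
      rw [abs_div, abs_of_pos hr, abs_mul (k / r ^ 2 - 1), abs_of_nonneg (sq_nonneg (ψ r))]
      gcongr ?_ + ?_
      · calc |ψ r * ψ' r| / r ≤ f / r := by gcongr
          _ ≤ f / r ^ 2 := div_le_div_of_nonneg_left hf (pow_pos hr 2) hr2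
      · exact mul_le_mul hcoef (by nlinarith [sq_nonneg (ψ' r)]) (sq_nonneg _) (by positivity)
    _ = _ := by ring
  unfold radialLyapunov
  rw [abs_mul, abs_of_pos (pow_pos hr n)]
  calc _ ≤ r ^ 3 * ((|k| + 2) * f / r ^ 2) :=
        mul_le_mul (pow_le_pow_of_le_one hr.le hr1 hn) hC (abs_nonneg _) (by positivity)
    _ = _ := by field_simp

theorem abs_radialLyapunov_le_of_one_le {r δ : ℝ} (hr1 : 1 ≤ r) (hψδ : |ψ r| ≤ δ)
    (hψ'1 : |ψ' r| ≤ 1) :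
    |radialLyapunov n k ψ ψ' r| ≤ r ^ n * (δ + (|k| + 1) * δ ^ 2) := by
  have hr : 0 < r := by linarith
  unfold radialLyapunov
  rw [abs_mul, abs_of_pos (pow_pos hr n)]
  have hδ : 0 ≤ δ := (abs_nonneg _).trans hψδ
  have hcoef : |k / r ^ 2 - 1| ≤ |k| + 1 := calc
    _ ≤ |k / r ^ 2| + |1| := abs_sub _ _
    _ ≤ |k| + 1 := by
      rw [abs_div, abs_one, abs_of_pos (pow_pos hr 2)]
      gcongr
      exact div_le_self (abs_nonneg k) (one_le_pow₀ hr1)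
  gcongr
  calc _ ≤ |ψ r * ψ' r / r| + |(k / r ^ 2 - 1) * ψ r ^ 2| := abs_sub _ _
    _ ≤ δ * 1 + (|k| + 1) * δ ^ 2 := by
      rw [abs_div, abs_of_pos hr, abs_mul (k / r ^ 2 - 1), abs_of_nonneg (sq_nonneg (ψ r)),
        abs_mul]
      refine add_le_add ?_ (mul_le_mul hcoef ?_ (sq_nonneg _) (by positivity))
      · exact (div_le_self (by positivity) hr1).trans (mul_le_mul hψδ hψ'1 (abs_nonneg _) hδ)
      · exact sq_le_sq' (abs_le.mp hψδ).1 (abs_le.mp hψδ).2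
    _ = _ := by ring

theorem frequently_abs_radialLyapunov_lt_nhdsGT (hn : 3 ≤ n)
    (hint : IntegrableOn (fun r => ψ r ^ 2 + ψ' r ^ 2) (Ioi 0)) {ε : ℝ} (hε : 0 < ε) :
    ∃ᶠ r in 𝓝[>] 0, |radialLyapunov n k ψ ψ' r| < ε := by
  have hsmall := frequently_mul_lt_nhdsGT_of_integrableOn hint (ε := ε / (|k| + 2)) (by positivity)
  have hnear : ∀ᶠ r in 𝓝[>] (0 : ℝ), r ∈ Ioc 0 1 := Ioc_mem_nhdsGT one_pos
  refine (hsmall.and_eventually hnear).mono fun r ⟨hr, hr0, hr1⟩ => ?_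
  calc _ ≤ (|k| + 2) * (r * (ψ r ^ 2 + ψ' r ^ 2)) := abs_radialLyapunov_le_of_le_one hn hr0 hr1
    _ < (|k| + 2) * (ε / (|k| + 2)) := by gcongr
    _ = ε := by field_simp

theorem frequently_abs_radialLyapunov_lt_atTop (hn : 2 ≤ n) (hk : 0 ≤ k)
    (hψ : ∀ r ∈ Ioi 0, HasDerivAt ψ (ψ' r) r)
    (hψ' : ∀ r ∈ Ioi 0, HasDerivAt ψ'
      (-((n - 1) / r) * ψ' r + (r ^ 2 + k * (k + n - 2) / r ^ 2 - n - 2) * ψ r) r)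
    (hint : IntegrableOn (fun r => ψ r ^ 2 + ψ' r ^ 2) (Ioi 0)) {ε : ℝ} (hε : 0 < ε) :
    ∃ᶠ r in atTop, |radialLyapunov n k ψ ψ' r| < ε := by
  have hn' : (2 : ℝ) ≤ n := by exact_mod_cast hn
  set R : ℝ := n + 2
  have hR : 0 < R := by positivity
  have hdecay := abs_le_mul_exp_of_hasDerivAt_of_tendsto (R := R) (by linarith) hR.le
    (fun r (hr : R < r) => by
      have : 0 ≤ k * (k + n - 2) / r ^ 2 := div_nonneg (mul_nonneg hk (by linarith)) (sq_nonneg r)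
      nlinarith)
    (fun r hr => hψ r (hR.trans_le hr)) (fun r hr => hψ' r (hR.trans hr))
    (tendsto_atTop_zero_of_integrableOn_sq_add_sq hψ hint)
  set M := |ψ R| * exp R
  set G : ℝ → ℝ := fun r => r ^ n * (M * exp (-r) + (|k| + 1) * (M * exp (-r)) ^ 2)
  have hG : Tendsto G atTop (𝓝 0) := by
    have h := tendsto_pow_mul_exp_neg_atTop_nhds_zero n
    have := (h.const_mul M).add
      ((h.mul tendsto_exp_neg_atTop_nhds_zero).const_mul ((|k| + 1) * M ^ 2))
    simp only [mul_zero, add_zero] at this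
    refine this.congr fun r => ?_
    simp only [G]
    ring_nf
  refine ((frequently_mul_lt_atTop_of_integrableOn hint one_pos).and_eventually
    ((hG.eventually_lt_const hε).and (eventually_ge_atTop (max R 1)))).mono ?_
  rintro r ⟨hrf, hGr, hr⟩
  have hr1 : 1 ≤ r := (le_max_right R 1).trans hr
  have hψ'1 : |ψ' r| ≤ 1 := by
    rw [← sq_le_one_iff_abs_le_one]
    nlinarith [sq_nonneg (ψ r), sq_nonneg (ψ' r)]
  have hψr : |ψ r| ≤ M * exp (-r) := by
    refine (hdecay r ((le_max_left R 1).trans hr)).trans_eq ?_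
    rw [mul_assoc, ← exp_add, sub_eq_add_neg]
  exact (abs_radialLyapunov_le_of_one_le hr1 hψr hψ'1).trans_lt hGr

theorem eq_zero_of_radialLyapunov_eq_zero (hk : 1 < k)
    (hψ : ∀ r ∈ Ioi 0, HasDerivAt ψ (ψ' r) r)
    (hψ' : ∀ r ∈ Ioi 0, HasDerivAt ψ'
      (-((n - 1) / r) * ψ' r + (r ^ 2 + k * (k + n - 2) / r ^ 2 - n - 2) * ψ r) r)
    (hB : ∀ r ∈ Ioi 0, radialLyapunov n k ψ ψ' r = 0) :
    ∀ r ∈ Ioi 0, ψ r = 0 := by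
  intro r (hr : 0 < r)
  have hflat : HasDerivAt (radialLyapunov n k ψ ψ') 0 r :=
    (hasDerivAt_const r 0).congr_of_eventuallyEq <|
      eventually_of_mem (Ioi_mem_nhds hr) fun x hx => hB x hx
  have hzero := (hasDerivAt_radialLyapunov hr (hψ r hr) (hψ' r hr)).unique hflat
  have hsum : (ψ' r - (k / r - r) * ψ r) ^ 2 + (2 * k - 2) * ψ r ^ 2 = 0 :=
    (mul_eq_zero.mp hzero).resolve_left (by positivity)
  have hsq : ψ r ^ 2 = 0 := by nlinarith [sq_nonneg (ψ' r - (k / r - r) * ψ r), sq_nonneg (ψ r)]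
  exact pow_eq_zero_iff two_ne_zero |>.mp hsq

end RadialLyapunov

theorem radial_mode_higher_trivial_general (n k : ℕ) (hn : 3 ≤ n) (hk : 2 ≤ k)
    (ψ ψ' ψ'' : ℝ → ℝ)
    (hd1 : ∀ r ∈ Ioi (0 : ℝ), HasDerivAt ψ (ψ' r) r)
    (hd2 : ∀ r ∈ Ioi (0 : ℝ), HasDerivAt ψ' (ψ'' r) r)
    (hint : IntegrableOn (fun r => (ψ r) ^ 2 + (ψ' r) ^ 2) (Ioi (0 : ℝ)))
    (hode : ∀ r ∈ Ioi (0 : ℝ),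
      -(ψ'' r) - ((n - 1) / r) * ψ' r
        + (r ^ 2 + (k * (k + n - 2) : ℝ) / r ^ 2 - n - 2) * ψ r = 0) :
    ∀ r ∈ Ioi (0 : ℝ), ψ r = 0 := by
  have hk' : (1 : ℝ) < k := by exact_mod_cast hk
  have hψ' : ∀ r ∈ Ioi (0 : ℝ), HasDerivAt ψ'
      (-((n - 1) / r) * ψ' r + (r ^ 2 + k * (k + n - 2) / r ^ 2 - n - 2) * ψ r) r :=
    fun r hr => (hd2 r hr).congr_deriv (by linarith [hode r hr])
  have hB := eq_zero_of_monotoneOn_of_frequently_abs_lt (monotoneOn_radialLyapunov hk'.le hd1 hψ')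
    (fun ε hε => frequently_abs_radialLyapunov_lt_nhdsGT hn hint hε)
    (fun ε hε => frequently_abs_radialLyapunov_lt_atTop (by omega) (by positivity) hd1 hψ' hint hε)
  exact eq_zero_of_radialLyapunov_eq_zero hk' hd1 hψ' hB

/-- Claim 3 in the proof of nondegeneracy: for `k ≥ 2` (`λ_k = k(k+n−2)`), the equation
`−ψ″ − ((n−1)/r)ψ′ + (r² + λ_k/r² − n − 2)ψ = 0` has only the trivial solution
in `H¹(ℝ₊)`. -/
theorem radial_mode_higher_trivial (n k : ℕ) (hn : 3 ≤ n) (hk : 2 ≤ k)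
    (ψ ψ' ψ'' : ℝ → ℝ)
    (hd1 : ∀ r ∈ Ioi (0 : ℝ), HasDerivAt ψ (ψ' r) r)
    (hd2 : ∀ r ∈ Ioi (0 : ℝ), HasDerivAt ψ' (ψ'' r) r)
    (hc2 : ContinuousOn ψ'' (Ioi (0 : ℝ)))
    (hint : IntegrableOn (fun r => (ψ r) ^ 2 + (ψ' r) ^ 2) (Ioi (0 : ℝ)))
    (hode : ∀ r ∈ Ioi (0 : ℝ),
      -(ψ'' r) - ((n - 1) / r) * ψ' r
        + (r ^ 2 + (k * (k + n - 2) : ℝ) / r ^ 2 - n - 2) * ψ r = 0) :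
    ∀ r ∈ Ioi (0 : ℝ), ψ r = 0 :=
  radial_mode_higher_trivial_general n k hn hk ψ ψ' ψ'' hd1 hd2 hint hode
end

section
/- Let n ≥ 3 and let δ ∈ (0, 2*−2] where 2* = 2n/(n−2). Suppose u_k : ℝⁿ → ℝ is a sequence of measurable functions and u : ℝⁿ → ℝ a measurable function such that u_k → u almost everywhere, u_k → u in L²(ℝⁿ), and u_k → u in L^{2+δ}(ℝⁿ). Then limsup_k ∫ u_k² log u_k² dx ≤ ∫ u² log u² dx, where ∫ v² log v² dx := ∫ G₂(v) dx − ∫ G₁(v) dx is understood as a value in [−∞, +∞) (∫G₂(v) dx being finite under the stated integrability). In particular, along such sequences, ∫ G₂(u_k) dx → ∫ G₂(u) dx and liminf_k ∫ G₁(u_k) dx ≥ ∫ G₁(u) dx. -/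
open MeasureTheory Real Filter

/-- `G₂(s) = (s² log s²)⁺`, the positive part of `s² log s²` (which vanishes at `s = 0`). -/
noncomputable def G₂ (s : ℝ) : ℝ := max (s ^ 2 * Real.log (s ^ 2)) 0

/-- `G₁(s) = (s² log s²)⁻`, the negative part of `s² log s²` (which vanishes at `s = 0`). -/
noncomputable def G₁ (s : ℝ) : ℝ := max (-(s ^ 2 * Real.log (s ^ 2))) 0

open scoped ENNReal Topology

/-!
Since `G₂(s) ≤ (2/δ)|s|^{2+δ}` and `∫ |u_k|^{2+δ} → ∫ |v|^{2+δ}`, a dominated convergence theorem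
with converging dominating functions gives `∫ G₂(u_k) → ∫ G₂(v)`, while Fatou's lemma gives
`∫ G₁(v) ≤ liminf ∫ G₁(u_k)`; together they bound the limsup of the difference.

That dominated convergence theorem splits `F_k = min(F_k, g) + (F_k - g)⁺`: the first part
converges by ordinary dominated convergence, the second is below `(G_k - g)⁺`, whose integral
tends to `0` by Scheffé's argument.
-/

theorem continuous_G₂ : Continuous G₂ :=
  (Real.continuous_mul_log.comp (continuous_pow 2)).max continuous_const

theorem continuous_G₁ : Continuous G₁ :=
  (Real.continuous_mul_log.comp (continuous_pow 2)).neg.max continuous_const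

theorem G₂_le_rpow {δ : ℝ} (hδ : 0 < δ) (s : ℝ) : G₂ s ≤ 2 / δ * |s| ^ (2 + δ) := by
  have hpow : |s| ^ (2 + δ) = s ^ 2 * (s ^ 2) ^ (δ / 2) := by
    rw [Real.rpow_add' (abs_nonneg s) (by positivity), Real.rpow_two, sq_abs, ← sq_abs s,
      ← Real.rpow_natCast, ← Real.rpow_mul (abs_nonneg s)]
    ring_nf
  refine max_le ?_ (by positivity)
  calc s ^ 2 * Real.log (s ^ 2) ≤ s ^ 2 * ((s ^ 2) ^ (δ / 2) / (δ / 2)) :=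
        mul_le_mul_of_nonneg_left (Real.log_le_rpow_div (sq_nonneg s) (by positivity))
          (sq_nonneg s)
    _ = 2 / δ * |s| ^ (2 + δ) := by rw [hpow]; field_simp

section GeneralizedDominatedConvergence

variable {α : Type*} [MeasurableSpace α] {μ : Measure α}

theorem lintegral_eq_lintegral_min_add_lintegral_tsub {F g : α → ℝ≥0∞}
    (hF : AEMeasurable F μ) (hg : AEMeasurable g μ) :
    ∫⁻ x, F x ∂μ = ∫⁻ x, min (F x) (g x) ∂μ + ∫⁻ x, F x - g x ∂μ := by
  rw [← lintegral_add_left' (hF.min hg)]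
  exact lintegral_congr fun x => by rw [add_comm, tsub_add_min]

theorem tendsto_lintegral_min_of_ae_tendsto {F : ℕ → α → ℝ≥0∞} {f g : α → ℝ≥0∞}
    (hF : ∀ n, AEMeasurable (F n) μ) (hg : AEMeasurable g μ) (hfg : f ≤ᵐ[μ] g)
    (hg_fin : ∫⁻ x, g x ∂μ ≠ ∞) (hF_lim : ∀ᵐ x ∂μ, Tendsto (F · x) atTop (𝓝 (f x))) :
    Tendsto (fun n => ∫⁻ x, min (F n x) (g x) ∂μ) atTop (𝓝 (∫⁻ x, f x ∂μ)) := by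
  refine tendsto_lintegral_of_dominated_convergence' g (fun n => (hF n).min hg)
    (fun n => ae_of_all _ fun x => min_le_right _ _) hg_fin ?_
  filter_upwards [hF_lim, hfg] with x hx hfgx
  simpa [min_eq_left hfgx] using hx.min (tendsto_const_nhds (x := g x))

theorem tendsto_lintegral_tsub_of_tendsto_lintegral {G : ℕ → α → ℝ≥0∞} {g : α → ℝ≥0∞}
    (hG : ∀ n, AEMeasurable (G n) μ) (hg : AEMeasurable g μ)
    (hG_lim : ∀ᵐ x ∂μ, Tendsto (G · x) atTop (𝓝 (g x)))
    (h_int : Tendsto (fun n => ∫⁻ x, G n x ∂μ) atTop (𝓝 (∫⁻ x, g x ∂μ)))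
    (hg_fin : ∫⁻ x, g x ∂μ ≠ ∞) :
    Tendsto (fun n => ∫⁻ x, G n x - g x ∂μ) atTop (𝓝 0) := by
  have hmin := tendsto_lintegral_min_of_ae_tendsto hG hg (ae_of_all _ fun _ => le_rfl) hg_fin hG_lim
  have hexcess : ∀ n, ∫⁻ x, G n x - g x ∂μ
      = ∫⁻ x, G n x ∂μ - ∫⁻ x, min (G n x) (g x) ∂μ := fun n =>
    ENNReal.eq_sub_of_add_eq
      (ne_top_of_le_ne_top hg_fin (lintegral_mono fun x => min_le_right _ _))
      (by rw [add_comm, ← lintegral_eq_lintegral_min_add_lintegral_tsub (hG n) hg])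
  simpa only [hexcess, tsub_self] using ENNReal.Tendsto.sub h_int hmin (Or.inl hg_fin)

theorem tendsto_lintegral_of_le_of_tendsto_lintegral {F G : ℕ → α → ℝ≥0∞} {f g : α → ℝ≥0∞}
    (hF : ∀ n, AEMeasurable (F n) μ) (hG : ∀ n, AEMeasurable (G n) μ) (hg : AEMeasurable g μ)
    (h_le : ∀ n, F n ≤ᵐ[μ] G n)
    (hF_lim : ∀ᵐ x ∂μ, Tendsto (F · x) atTop (𝓝 (f x)))
    (hG_lim : ∀ᵐ x ∂μ, Tendsto (G · x) atTop (𝓝 (g x)))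
    (h_int : Tendsto (fun n => ∫⁻ x, G n x ∂μ) atTop (𝓝 (∫⁻ x, g x ∂μ)))
    (hg_fin : ∫⁻ x, g x ∂μ ≠ ∞) :
    Tendsto (fun n => ∫⁻ x, F n x ∂μ) atTop (𝓝 (∫⁻ x, f x ∂μ)) := by
  have hfg : f ≤ᵐ[μ] g := by
    filter_upwards [hF_lim, hG_lim, ae_all_iff.2 h_le] with x hFx hGx hle
    exact le_of_tendsto_of_tendsto' hFx hGx hle
  have hmin := tendsto_lintegral_min_of_ae_tendsto hF hg hfg hg_fin hF_lim
  have hexcess : Tendsto (fun n => ∫⁻ x, F n x - g x ∂μ) atTop (𝓝 0) :=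
    tendsto_of_tendsto_of_tendsto_of_le_of_le tendsto_const_nhds
      (tendsto_lintegral_tsub_of_tendsto_lintegral hG hg hG_lim h_int hg_fin)
      (fun n => zero_le) fun n => lintegral_mono_ae <| (h_le n).mono fun x hx =>
        tsub_le_tsub_right hx _
  simpa only [← lintegral_eq_lintegral_min_add_lintegral_tsub (hF _) hg, add_zero]
    using hmin.add hexcess

end GeneralizedDominatedConvergence

section Lp

variable {α E : Type*} [MeasurableSpace α] {μ : Measure α} [NormedAddCommGroup E]

theorem tendsto_eLpNorm_of_tendsto_eLpNorm_sub {ι : Type*} {l : Filter ι} {p : ℝ≥0∞}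
    (hp : 1 ≤ p) {u : ι → α → E} {v : α → E} (hu : ∀ i, AEStronglyMeasurable (u i) μ)
    (hv : AEStronglyMeasurable v μ) (h : Tendsto (fun i => eLpNorm (u i - v) p μ) l (𝓝 0)) :
    Tendsto (fun i => eLpNorm (u i) p μ) l (𝓝 (eLpNorm v p μ)) := by
  have hlower : ∀ i, eLpNorm v p μ - eLpNorm (u i - v) p μ ≤ eLpNorm (u i) p μ := fun i => by
    rw [tsub_le_iff_left, add_comm]
    simpa using eLpNorm_sub_le (hu i) ((hu i).sub hv) hp
  have hupper : ∀ i, eLpNorm (u i) p μ ≤ eLpNorm (u i - v) p μ + eLpNorm v p μ := fun i => by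
    simpa using eLpNorm_add_le ((hu i).sub hv) hv hp
  refine tendsto_of_tendsto_of_tendsto_of_le_of_le ?_ ?_ hlower hupper
  · simpa using ENNReal.Tendsto.sub tendsto_const_nhds h (Or.inr ENNReal.zero_ne_top)
  · simpa using h.add (tendsto_const_nhds (x := eLpNorm v p μ))

theorem lintegral_rpow_enorm_eq_eLpNorm_ofReal_rpow {q : ℝ} (hq : 0 < q) (f : α → E) :
    ∫⁻ x, ‖f x‖ₑ ^ q ∂μ = eLpNorm f (ENNReal.ofReal q) μ ^ q := by
  rw [eLpNorm_eq_eLpNorm' (by simpa using hq) ENNReal.ofReal_ne_top,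
    ENNReal.toReal_ofReal hq.le, lintegral_rpow_enorm_eq_rpow_eLpNorm' hq]

theorem tendsto_lintegral_rpow_enorm_of_tendsto_eLpNorm_sub {ι : Type*} {l : Filter ι} {q : ℝ}
    (hq : 1 ≤ q) {u : ι → α → E} {v : α → E} (hu : ∀ i, AEStronglyMeasurable (u i) μ)
    (hv : AEStronglyMeasurable v μ)
    (h : Tendsto (fun i => eLpNorm (u i - v) (ENNReal.ofReal q) μ) l (𝓝 0)) :
    Tendsto (fun i => ∫⁻ x, ‖u i x‖ₑ ^ q ∂μ) l (𝓝 (∫⁻ x, ‖v x‖ₑ ^ q ∂μ)) := by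
  simp only [lintegral_rpow_enorm_eq_eLpNorm_ofReal_rpow (zero_lt_one.trans_le hq)]
  exact (ENNReal.continuous_rpow_const.tendsto _).comp
    (tendsto_eLpNorm_of_tendsto_eLpNorm_sub (by simpa using hq) hu hv h)

end Lp

section LogIntegral

variable {α : Type*} [MeasurableSpace α] {μ : Measure α}

theorem lintegral_comp_le_liminf_of_ae_tendsto {E : Type*} [TopologicalSpace E]
    [MeasurableSpace E] [OpensMeasurableSpace E] {φ : E → ℝ≥0∞} (hφ : Continuous φ)
    {u : ℕ → α → E} {v : α → E} (hu : ∀ k, AEMeasurable (u k) μ)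
    (hae : ∀ᵐ x ∂μ, Tendsto (u · x) atTop (𝓝 (v x))) :
    ∫⁻ x, φ (v x) ∂μ ≤ liminf (fun k => ∫⁻ x, φ (u k x) ∂μ) atTop := by
  calc ∫⁻ x, φ (v x) ∂μ = ∫⁻ x, liminf (fun k => φ (u k x)) atTop ∂μ := by
        refine lintegral_congr_ae ?_
        filter_upwards [hae] with x hx
        exact ((hφ.tendsto _).comp hx).liminf_eq.symm
    _ ≤ _ := lintegral_liminf_le' fun k => hφ.measurable.comp_aemeasurable (hu k)

theorem ofReal_G₂_le_mul_enorm_rpow {δ : ℝ} (hδ : 0 < δ) (s : ℝ) :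
    ENNReal.ofReal (G₂ s) ≤ ENNReal.ofReal (2 / δ) * ‖s‖ₑ ^ (2 + δ) := by
  rw [Real.enorm_eq_ofReal_abs, ENNReal.ofReal_rpow_of_nonneg (abs_nonneg s) (by positivity),
    ← ENNReal.ofReal_mul (by positivity)]
  exact ENNReal.ofReal_le_ofReal (G₂_le_rpow hδ s)

theorem integral_G₂_eq_toReal_lintegral {w : α → ℝ} (hw : AEMeasurable w μ) :
    ∫ x, G₂ (w x) ∂μ = (∫⁻ x, ENNReal.ofReal (G₂ (w x)) ∂μ).toReal :=
  integral_eq_lintegral_of_nonneg_ae (ae_of_all _ fun _ => le_max_right _ _)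
    (continuous_G₂.measurable.comp_aemeasurable hw).aestronglyMeasurable

theorem tendsto_integral_G₂ {δ : ℝ} (hδ : 0 < δ) {u : ℕ → α → ℝ} {v : α → ℝ}
    (hu : ∀ k, AEMeasurable (u k) μ) (hae : ∀ᵐ x ∂μ, Tendsto (u · x) atTop (𝓝 (v x)))
    (hv : MemLp v (ENNReal.ofReal (2 + δ)) μ)
    (hconv : Tendsto (fun k => eLpNorm (u k - v) (ENNReal.ofReal (2 + δ)) μ) atTop (𝓝 0)) :
    Tendsto (fun k => ∫ x, G₂ (u k x) ∂μ) atTop (𝓝 (∫ x, G₂ (v x) ∂μ)) := by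
  set C := ENNReal.ofReal (2 / δ)
  have hF : Continuous fun s => ENNReal.ofReal (G₂ s) :=
    ENNReal.continuous_ofReal.comp continuous_G₂
  have hG : Continuous fun s : ℝ => C * ‖s‖ₑ ^ (2 + δ) :=
    (ENNReal.continuous_const_mul ENNReal.ofReal_ne_top).comp
      (ENNReal.continuous_rpow_const.comp continuous_enorm)
  have hv_fin : ∫⁻ x, C * ‖v x‖ₑ ^ (2 + δ) ∂μ ≠ ∞ := by
    rw [lintegral_const_mul' _ _ ENNReal.ofReal_ne_top,
      lintegral_rpow_enorm_eq_eLpNorm_ofReal_rpow (by positivity)]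
    exact ENNReal.mul_ne_top ENNReal.ofReal_ne_top
      (ENNReal.rpow_ne_top_of_nonneg (by positivity) hv.eLpNorm_ne_top)
  have hG_int : Tendsto (fun k => ∫⁻ x, C * ‖u k x‖ₑ ^ (2 + δ) ∂μ) atTop
      (𝓝 (∫⁻ x, C * ‖v x‖ₑ ^ (2 + δ) ∂μ)) := by
    simp_rw [lintegral_const_mul' C _ ENNReal.ofReal_ne_top]
    exact ENNReal.Tendsto.const_mul (tendsto_lintegral_rpow_enorm_of_tendsto_eLpNorm_sub
      (by linarith) (fun k => (hu k).aestronglyMeasurable) hv.aestronglyMeasurable hconv)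
      (Or.inr ENNReal.ofReal_ne_top)
  have hF_int := tendsto_lintegral_of_le_of_tendsto_lintegral
    (fun k => hF.measurable.comp_aemeasurable (hu k))
    (fun k => hG.measurable.comp_aemeasurable (hu k))
    (hG.measurable.comp_aemeasurable hv.aestronglyMeasurable.aemeasurable)
    (fun k => ae_of_all _ fun x => ofReal_G₂_le_mul_enorm_rpow hδ (u k x))
    (hae.mono fun x hx => (hF.tendsto _).comp hx) (hae.mono fun x hx => (hG.tendsto _).comp hx)
    hG_int hv_fin
  simp only [integral_G₂_eq_toReal_lintegral (hu _),
    integral_G₂_eq_toReal_lintegral hv.aestronglyMeasurable.aemeasurable]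
  exact (ENNReal.tendsto_toReal (ne_top_of_le_ne_top hv_fin
    (lintegral_mono fun x => ofReal_G₂_le_mul_enorm_rpow hδ _))).comp hF_int

end LogIntegral

theorem EReal.limsup_coe_sub_coe_le {a : ℕ → ℝ} {b : ℕ → ℝ≥0∞} {a₀ : ℝ} {b₀ : ℝ≥0∞}
    (ha : Tendsto a atTop (𝓝 a₀)) (hb : b₀ ≤ liminf b atTop) :
    limsup (fun k => (a k : EReal) - b k) atTop ≤ a₀ - b₀ := by
  have ha' : limsup (fun k => (a k : EReal)) atTop = a₀ :=
    (EReal.tendsto_coe.2 ha).limsup_eq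
  have hb' : (b₀ : EReal) ≤ liminf (fun k => (b k : EReal)) atTop :=
    calc (b₀ : EReal) ≤ (liminf b atTop : ℝ≥0∞) := EReal.coe_ennreal_le_coe_ennreal_iff.2 hb
      _ = _ := EReal.coe_ennreal_strictMono.monotone.map_liminf_of_continuousAt b
        continuous_coe_ennreal_ereal.continuousAt
  calc limsup (fun k => (a k : EReal) - b k) atTop
      ≤ limsup (fun k => (a k : EReal)) atTop + limsup (fun k => -(b k : EReal)) atTop :=
        EReal.limsup_add_le (Or.inl (by simp [ha'])) (Or.inl (by simp [ha']))
    _ = a₀ - liminf (fun k => (b k : EReal)) atTop := by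
        rw [ha', sub_eq_add_neg, ← EReal.limsup_neg]; rfl
    _ ≤ a₀ - b₀ := EReal.sub_le_sub le_rfl hb'

theorem upper_semicontinuity_log_integral_general (n : ℕ)
    (δ : ℝ) (hδ0 : 0 < δ)
    (u : ℕ → EuclideanSpace ℝ (Fin n) → ℝ) (v : EuclideanSpace ℝ (Fin n) → ℝ)
    (hmeas : ∀ k, Measurable (u k))
    (hae : ∀ᵐ x : EuclideanSpace ℝ (Fin n), Tendsto (fun k => u k x) atTop (nhds (v x)))
    (hvLp : MemLp v (ENNReal.ofReal (2 + δ)) volume)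
    (hLpconv : Tendsto (fun k => eLpNorm (u k - v) (ENNReal.ofReal (2 + δ)) volume)
      atTop (nhds 0)) :
    Filter.limsup (fun k =>
        ((∫ x, G₂ (u k x) : ℝ) : EReal)
          - ENNReal.toEReal (∫⁻ x, ENNReal.ofReal (G₁ (u k x)))) atTop
      ≤ ((∫ x, G₂ (v x) : ℝ) : EReal)
          - ENNReal.toEReal (∫⁻ x, ENNReal.ofReal (G₁ (v x))) ∧
    Tendsto (fun k => ∫ x, G₂ (u k x)) atTop (nhds (∫ x, G₂ (v x))) ∧
    (∫⁻ x, ENNReal.ofReal (G₁ (v x))) ≤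
      Filter.liminf (fun k => ∫⁻ x, ENNReal.ofReal (G₁ (u k x))) atTop := by
  have hG₂ := tendsto_integral_G₂ hδ0 (fun k => (hmeas k).aemeasurable) hae hvLp hLpconv
  have hG₁ := lintegral_comp_le_liminf_of_ae_tendsto
    (ENNReal.continuous_ofReal.comp continuous_G₁) (fun k => (hmeas k).aemeasurable) hae
  exact ⟨EReal.limsup_coe_sub_coe_le hG₂ hG₁, hG₂, hG₁⟩

/-- Upper semicontinuity of `u ↦ ∫ u² log u²` along sequences converging a.e., in `L²`
and in `L^{2+δ}`, `0 < δ ≤ 2* − 2`: one has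
`limsup_k ∫ u_k² log u_k² ≤ ∫ u² log u²` (with values in `[−∞, +∞)`, writing
`∫ v² log v² = ∫ G₂(v) − ∫ G₁(v)`); in particular `∫ G₂(u_k) → ∫ G₂(u)` and
`∫ G₁(u) ≤ liminf_k ∫ G₁(u_k)`. -/
theorem upper_semicontinuity_log_integral (n : ℕ) (hn : 3 ≤ n)
    (δ : ℝ) (hδ0 : 0 < δ) (hδ1 : δ ≤ 2 * n / (n - 2) - 2)
    (u : ℕ → EuclideanSpace ℝ (Fin n) → ℝ) (v : EuclideanSpace ℝ (Fin n) → ℝ)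
    (hmeas : ∀ k, Measurable (u k)) (hvmeas : Measurable v)
    (hae : ∀ᵐ x : EuclideanSpace ℝ (Fin n), Tendsto (fun k => u k x) atTop (nhds (v x)))
    (hL2 : ∀ k, MemLp (u k) 2 volume) (hvL2 : MemLp v 2 volume)
    (hL2conv : Tendsto (fun k => eLpNorm (u k - v) 2 volume) atTop (nhds 0))
    (hLp : ∀ k, MemLp (u k) (ENNReal.ofReal (2 + δ)) volume)
    (hvLp : MemLp v (ENNReal.ofReal (2 + δ)) volume)
    (hLpconv : Tendsto (fun k => eLpNorm (u k - v) (ENNReal.ofReal (2 + δ)) volume)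
      atTop (nhds 0)) :
    Filter.limsup (fun k =>
        ((∫ x, G₂ (u k x) : ℝ) : EReal)
          - ENNReal.toEReal (∫⁻ x, ENNReal.ofReal (G₁ (u k x)))) atTop
      ≤ ((∫ x, G₂ (v x) : ℝ) : EReal)
          - ENNReal.toEReal (∫⁻ x, ENNReal.ofReal (G₁ (v x))) ∧
    Tendsto (fun k => ∫ x, G₂ (u k x)) atTop (nhds (∫ x, G₂ (v x))) ∧
    (∫⁻ x, ENNReal.ofReal (G₁ (v x))) ≤
      Filter.liminf (fun k => ∫⁻ x, ENNReal.ofReal (G₁ (u k x))) atTop :=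
  upper_semicontinuity_log_integral_general n δ hδ0 u v hmeas hae hvLp hLpconv
end
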